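/- arXiv:1609.04040 — 5 statements merged into one kernel-verified Lean document; each statement's English description precedes it below -/
import Mathlib

section
/- Let (X,d) be a finite metric space, Y a real normed vector space, and {Z_t}_{t≥0} a stationary reversible Markov chain on X satisfying d(Z_0,Z_1) ≤ 1 almost surely. Let f : X → Y. Then for every n ≥ 1 there exist a martingale {A_t}_{t=0}^{n} with respect to the natural filtration of (Z_0, Z_1, …, Z_{2n}) and a martingale {B_t}_{t=0}^{n} with respect to the natural filtration of the time-reversed sequence (Z_{2n}, Z_{2n-1}, …, Z_0) such that: (1) f(Z_{2n}) − f(Z_0) = A_n − B_n almost surely, and (2) for every t = 1, …, n, ‖A_t − A_{t−1}‖_Y ≤ 2‖f‖_Lip and ‖B_t − B_{t−1}‖_Y ≤ 2‖f‖_Lip almost surely. -/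
/-!
With `Pf x = ∑ y, P x y • f y`, take `A_t = ∑_{s<t} (f Z_{2s+2} - Pf Z_{2s+1})` and let `B` be the
same process built from the reversed path `Z_{2n-i}`, which by detailed balance is again a copy of
the chain. The Markov property makes every increment centred given the past, so `A` and `B` are
martingales. In `A_n - B_n` the terms `Pf Z_{2s+1}` cancel and the `f` terms telescope to
`f Z_{2n} - f Z_0`. An increment splits as `(f Z_{2s+2} - f Z_{2s+1}) + (f Z_{2s+1} - Pf Z_{2s+1})`,
and both parts are at most `‖f‖_Lip` because almost surely every step of the chain has length at
most one.
-/

open MeasureTheory Finset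

noncomputable section

namespace ReversibleChain

variable {X : Type*} {π : X → ℝ} {P : X → X → ℝ}

def pathWeight (π : X → ℝ) (P : X → X → ℝ) (m : ℕ) (x : Fin (m + 1) → X) : ℝ :=
  π (x 0) * ∏ i : Fin m, P (x i.castSucc) (x i.succ)

theorem pathWeight_snoc {m : ℕ} (x : Fin (m + 1) → X) (z : X) :
    pathWeight π P (m + 1) (Fin.snoc x z) = pathWeight π P m x * P (x (Fin.last m)) z := by
  simp only [pathWeight, Fin.prod_univ_castSucc, Fin.succ_castSucc, Fin.snoc_castSucc,
    Fin.succ_last, Fin.snoc_last, mul_assoc]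
  rfl

theorem pathWeight_cons {m : ℕ} (x : Fin (m + 1) → X) (z : X) :
    pathWeight π P (m + 1) (Fin.cons z x) =
      π z * P z (x 0) * ∏ i : Fin m, P (x i.castSucc) (x i.succ) := by
  simp [pathWeight, Fin.prod_univ_succ, mul_assoc]

theorem pathWeight_nonneg (hπ0 : ∀ x, 0 ≤ π x) (hP0 : ∀ x y, 0 ≤ P x y) {m : ℕ}
    (x : Fin (m + 1) → X) : 0 ≤ pathWeight π P m x :=
  mul_nonneg (hπ0 _) (prod_nonneg fun _ _ => hP0 _ _)

theorem pathWeight_comp_rev (hrev : ∀ x y, π x * P x y = π y * P y x) :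
    ∀ {m : ℕ} (x : Fin (m + 1) → X), pathWeight π P m (x ∘ Fin.rev) = pathWeight π P m x
  | 0, x => by simp [pathWeight]
  | m + 1, x => by
    rw [← Fin.snoc_init_self x, Fin.snoc_comp_rev, pathWeight_cons, pathWeight_snoc,
      ← pathWeight_comp_rev hrev (Fin.init x)]
    simp only [pathWeight, Function.comp_apply, Fin.rev_zero]
    linear_combination (∏ i : Fin m, P (Fin.init x i.castSucc.rev) (Fin.init x i.succ.rev)) *
      hrev (x (Fin.last (m + 1))) (Fin.init x (Fin.last m))

theorem pi_last_ne_zero_of_pathWeight_ne_zero (hrev : ∀ x y, π x * P x y = π y * P y x)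
    {m : ℕ} {x : Fin (m + 1) → X} (hx : pathWeight π P m x ≠ 0) : π (x (Fin.last m)) ≠ 0 := by
  rw [← pathWeight_comp_rev hrev, pathWeight] at hx
  simpa using left_ne_zero_of_mul hx

theorem norm_sub_le_of_dist_le_one {α Y : Type*} [PseudoMetricSpace α] [SeminormedAddCommGroup Y]
    {f : α → Y} {K : NNReal} (hK : LipschitzWith K f) {x y : α} (h : dist x y ≤ 1) :
    ‖f x - f y‖ ≤ K := by
  simpa [dist_eq_norm] using hK.dist_le_mul_of_le h

section Finite

variable [Fintype X]

def markovAvg {Y : Type*} [AddCommMonoid Y] [Module ℝ Y] (P : X → X → ℝ) (f : X → Y) (x : X) :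
    Y :=
  ∑ y, P x y • f y

theorem sum_smul_sub_markovAvg {Y : Type*} [AddCommGroup Y] [Module ℝ Y]
    (hP1 : ∀ x, ∑ y, P x y = 1) (f : X → Y) (x : X) :
    ∑ y, P x y • (f y - markovAvg P f x) = 0 := by
  simp [smul_sub, sum_sub_distrib, ← sum_smul, hP1, markovAvg]

theorem norm_sub_markovAvg_le [PseudoMetricSpace X] {Y : Type*} [SeminormedAddCommGroup Y]
    [NormedSpace ℝ Y] (hP0 : ∀ x y, 0 ≤ P x y) (hP1 : ∀ x, ∑ y, P x y = 1) {f : X → Y}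
    {K : NNReal} (hK : LipschitzWith K f) {x : X} (hx : ∀ y, P x y ≠ 0 → dist x y ≤ 1) :
    ‖f x - markovAvg P f x‖ ≤ K := by
  have hsum : f x - markovAvg P f x = ∑ y, P x y • (f x - f y) := by
    simp [smul_sub, sum_sub_distrib, ← sum_smul, hP1, markovAvg]
  calc ‖f x - markovAvg P f x‖ ≤ ∑ y, P x y * ‖f x - f y‖ := by
        rw [hsum]
        refine (norm_sum_le _ _).trans_eq (sum_congr rfl fun y _ => ?_)
        rw [norm_smul, Real.norm_of_nonneg (hP0 x y)]
    _ ≤ ∑ y, P x y * K := by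
        refine sum_le_sum fun y _ => ?_
        rcases eq_or_ne (P x y) 0 with hxy | hxy
        · simp [hxy]
        · exact mul_le_mul_of_nonneg_left (norm_sub_le_of_dist_le_one hK (hx y hxy)) (hP0 x y)
    _ = K := by rw [← sum_mul, hP1, one_mul]

theorem sum_pi_eq_sum_sum_snoc {M : Type*} [AddCommMonoid M] {m : ℕ} (F : (Fin (m + 1) → X) → M) :
    ∑ v, F v = ∑ p : Fin m → X, ∑ z, F (Fin.snoc p z) := by
  rw [← (Fin.snocEquiv fun _ => X).sum_comp, Fintype.sum_prod_type, Finset.sum_comm]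
  rfl

theorem sum_pathWeight_snoc (hP1 : ∀ x, ∑ y, P x y = 1) {m : ℕ} (x : Fin (m + 1) → X) :
    ∑ z, pathWeight π P (m + 1) (Fin.snoc x z) = pathWeight π P m x := by
  simp only [pathWeight_snoc, ← mul_sum, hP1, mul_one]

theorem sum_pathWeight_indicator_take (hP1 : ∀ x, ∑ y, P x y = 1) {m N : ℕ} (h : m + 1 ≤ N + 1)
    (x : Fin (m + 1) → X) :
    ∑ v, ((Fin.take (m + 1) h : (Fin (N + 1) → X) → Fin (m + 1) → X) ⁻¹' {x}).indicator
      (pathWeight π P N) v = pathWeight π P m x := by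
  classical
  induction N, Nat.le_of_succ_le_succ h using Nat.le_induction with
  | base => simp [Set.indicator_apply, Fin.take_eq_self]
  | succ N h' ih =>
    rw [sum_pi_eq_sum_sum_snoc, ← ih (by omega)]
    refine sum_congr rfl fun p _ => ?_
    have htake : ∀ z, Fin.take (m + 1) h (Fin.snoc p z : Fin (N + 2) → X) =
        Fin.take (m + 1) (by omega) p := fun z => by rw [← Fin.take_init, Fin.init_snoc]
    simp only [Set.indicator_apply, Set.mem_preimage, Set.mem_singleton_iff, htake]
    split_ifs
    · exact sum_pathWeight_snoc hP1 p
    · exact sum_const_zero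

theorem sum_pathWeight_smul_indicator_increment {Y : Type*} [AddCommGroup Y] [Module ℝ Y]
    (hP1 : ∀ x, ∑ y, P x y = 1) {M : ℕ} (S : Set (Fin (M + 1) → X)) (f : X → Y) :
    ∑ v, pathWeight π P (M + 1) v •
      ((Fin.init : (Fin (M + 2) → X) → Fin (M + 1) → X) ⁻¹' S).indicator
        (fun v => f (v (Fin.last (M + 1))) - markovAvg P f (v (Fin.last M).castSucc)) v = 0 := by
  classical
  rw [sum_pi_eq_sum_sum_snoc]
  refine sum_eq_zero fun p _ => ?_
  simp only [Set.indicator_apply, Set.mem_preimage, Fin.init_snoc, Fin.snoc_last,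
    Fin.snoc_castSucc, pathWeight_snoc]
  split_ifs
  · simp only [mul_smul, ← smul_sum, sum_smul_sub_markovAvg hP1, smul_zero]
  · simp

theorem norm_increment_le [PseudoMetricSpace X] {Y : Type*} [SeminormedAddCommGroup Y]
    [NormedSpace ℝ Y] (hP0 : ∀ x y, 0 ≤ P x y) (hP1 : ∀ x, ∑ y, P x y = 1)
    (hrev : ∀ x y, π x * P x y = π y * P y x) (hdist : ∀ x y, π x * P x y ≠ 0 → dist x y ≤ 1)
    {f : X → Y} {K : NNReal} (hK : LipschitzWith K f) {M : ℕ} {v : Fin (M + 2) → X}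
    (hv : pathWeight π P (M + 1) v ≠ 0) :
    ‖f (v (Fin.last (M + 1))) - markovAvg P f (v (Fin.last M).castSucc)‖ ≤ 2 * K := by
  have hsplit := pathWeight_snoc (π := π) (P := P) (Fin.init v) (v (Fin.last (M + 1)))
  rw [Fin.snoc_init_self] at hsplit
  obtain ⟨hw, hxy⟩ := mul_ne_zero_iff.1 (hsplit ▸ hv)
  have hx := pi_last_ne_zero_of_pathWeight_ne_zero hrev hw
  set x := v (Fin.last M).castSucc
  set y := v (Fin.last (M + 1))
  calc ‖f y - markovAvg P f x‖ ≤ ‖f y - f x‖ + ‖f x - markovAvg P f x‖ :=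
        norm_sub_le_norm_sub_add_norm_sub _ _ _
    _ ≤ K + K := by
        refine add_le_add (norm_sub_le_of_dist_le_one hK ?_) ?_
        · exact dist_comm x y ▸ hdist x y (mul_ne_zero hx hxy)
        · exact norm_sub_markovAvg_le hP0 hP1 hK fun z hz => hdist x z (mul_ne_zero hx hz)
    _ = 2 * K := (two_mul _).symm

end Finite

section Paths

variable {Ω : Type*} {Z : ℕ → Ω → X}

def path (Z : ℕ → Ω → X) (m : ℕ) (ω : Ω) : Fin (m + 1) → X := fun i => Z i ω

abbrev pastSigma (Z : ℕ → Ω → X) (k : ℕ) : MeasurableSpace Ω :=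
  ⨆ i ∈ range (k + 1), MeasurableSpace.comap (Z i) ⊤

def HasPathLaw [MeasurableSpace Ω] (μ : Measure Ω) (Z : ℕ → Ω → X) (π : X → ℝ) (P : X → X → ℝ)
    (m : ℕ) : Prop :=
  ∀ x : Fin (m + 1) → X,
    μ {ω | ∀ i : Fin (m + 1), Z i ω = x i} = ENNReal.ofReal (pathWeight π P m x)

theorem pastSigma_mono (Z : ℕ → Ω → X) {k l : ℕ} (h : k ≤ l) : pastSigma Z k ≤ pastSigma Z l :=
  biSup_mono fun i hi => mem_range.2 ((mem_range.1 hi).trans_le (by omega))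

theorem pastSigma_le [m0 : MeasurableSpace Ω] (hZ : ∀ t (s : Set X), MeasurableSet (Z t ⁻¹' s))
    (k : ℕ) : pastSigma Z k ≤ m0 :=
  iSup₂_le fun i _ => by
    rintro s ⟨t, -, rfl⟩
    exact hZ i t

variable [Finite X]

theorem pastSigma_eq_comap_path (Z : ℕ → Ω → X) (k : ℕ) :
    pastSigma Z k = MeasurableSpace.comap (path Z k) ⊤ := by
  let : MeasurableSpace X := ⊤
  refine le_antisymm (iSup₂_le fun i hi => ?_) ?_
  · have hZi : Z i = (fun v => v ⟨i, mem_range.1 hi⟩) ∘ path Z k := rfl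
    rw [hZi, ← MeasurableSpace.comap_comp]
    exact MeasurableSpace.comap_mono le_top
  · have htop : (⊤ : MeasurableSpace (Fin (k + 1) → X)) = MeasurableSpace.pi :=
      le_antisymm (fun s _ => s.toFinite.measurableSet) le_top
    rw [htop, MeasurableSpace.pi, MeasurableSpace.comap_iSup]
    refine iSup_le fun i => ?_
    rw [MeasurableSpace.comap_comp]
    exact le_iSup₂_of_le (i : ℕ) (mem_range.2 i.2) le_rfl

theorem measurable_path [m0 : MeasurableSpace Ω]
    (hZ : ∀ t (s : Set X), MeasurableSet (Z t ⁻¹' s)) (k : ℕ) : Measurable[m0, ⊤] (path Z k) :=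
  Measurable.of_comap_le ((pastSigma_eq_comap_path Z k).symm.le.trans (pastSigma_le hZ k))

theorem stronglyMeasurable_comp_path {E : Type*} [TopologicalSpace E] (k : ℕ)
    (G : (Fin (k + 1) → X) → E) : StronglyMeasurable[pastSigma Z k] (fun ω => G (path Z k ω)) := by
  let : MeasurableSpace (Fin (k + 1) → X) := ⊤
  rw [pastSigma_eq_comap_path]
  exact StronglyMeasurable.of_discrete.comp_measurable (comap_measurable _)

theorem integrable_comp_path [MeasurableSpace Ω] {μ : Measure Ω} [IsFiniteMeasure μ]
    {E : Type*} [NormedAddCommGroup E] (hZ : ∀ t (s : Set X), MeasurableSet (Z t ⁻¹' s)) (k : ℕ)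
    (G : (Fin (k + 1) → X) → E) : Integrable (fun ω => G (path Z k ω)) μ := by
  let : MeasurableSpace (Fin (k + 1) → X) := ⊤
  exact (integrable_map_measure StronglyMeasurable.of_discrete.aestronglyMeasurable
    (measurable_path hZ k).aemeasurable).1 Integrable.of_finite

end Paths

section PathLaw

variable [Fintype X] {Ω : Type*} [MeasurableSpace Ω] {μ : Measure Ω} [IsFiniteMeasure μ]
  {Z : ℕ → Ω → X} {Y : Type*} [NormedAddCommGroup Y] [NormedSpace ℝ Y]

theorem integral_comp_path [CompleteSpace Y] (hZ : ∀ t (s : Set X), MeasurableSet (Z t ⁻¹' s))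
    {m : ℕ} (hlaw : HasPathLaw μ Z π P m) (hπ0 : ∀ x, 0 ≤ π x) (hP0 : ∀ x y, 0 ≤ P x y)
    (G : (Fin (m + 1) → X) → Y) :
    ∫ ω, G (path Z m ω) ∂μ = ∑ v, pathWeight π P m v • G v := by
  let : MeasurableSpace (Fin (m + 1) → X) := ⊤
  have hmeas := measurable_path hZ m (Z := Z)
  rw [← integral_map hmeas.aemeasurable StronglyMeasurable.of_discrete.aestronglyMeasurable,
    integral_fintype Integrable.of_finite]
  refine sum_congr rfl fun v _ => ?_
  have hv : path Z m ⁻¹' {v} = {ω | ∀ i : Fin (m + 1), Z i ω = v i} := by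
    ext ω
    simp [path, funext_iff]
  rw [map_measureReal_apply hmeas trivial, measureReal_def, hv, hlaw v,
    ENNReal.toReal_ofReal (pathWeight_nonneg hπ0 hP0 v)]

theorem measureReal_preimage_path (hZ : ∀ t (s : Set X), MeasurableSet (Z t ⁻¹' s))
    {m : ℕ} (hlaw : HasPathLaw μ Z π P m) (hπ0 : ∀ x, 0 ≤ π x) (hP0 : ∀ x y, 0 ≤ P x y)
    (E : Set (Fin (m + 1) → X)) :
    μ.real (path Z m ⁻¹' E) = ∑ v, E.indicator (pathWeight π P m) v := by
  classical
  calc μ.real (path Z m ⁻¹' E) = ∫ ω, E.indicator (1 : (Fin (m + 1) → X) → ℝ) (path Z m ω) ∂μ :=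
        (integral_indicator_one (measurable_path hZ m trivial)).symm
    _ = ∑ v, E.indicator (pathWeight π P m) v := by
        rw [integral_comp_path hZ hlaw hπ0 hP0]
        simp [Set.indicator_apply]

theorem HasPathLaw.reverse (hZ : ∀ t (s : Set X), MeasurableSet (Z t ⁻¹' s)) {N : ℕ}
    (hlaw : HasPathLaw μ Z π P N) (hπ0 : ∀ x, 0 ≤ π x) (hP0 : ∀ x y, 0 ≤ P x y)
    (hP1 : ∀ x, ∑ y, P x y = 1) (hrev : ∀ x y, π x * P x y = π y * P y x) {m : ℕ}
    (hm : m ≤ N) : HasPathLaw μ (fun i => Z (N - i)) π P m := by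
  intro x
  set T := (Fin.take (m + 1) (by omega) : (Fin (N + 1) → X) → Fin (m + 1) → X) ⁻¹' {x}
  have hset : {ω | ∀ i : Fin (m + 1), Z (N - i) ω = x i} =
      path Z N ⁻¹' ((· ∘ Fin.rev) ⁻¹' T) := by
    ext ω
    simp [T, path, funext_iff, Fin.take_apply, Fin.val_rev]
  rw [hset, ← ofReal_measureReal, measureReal_preimage_path hZ hlaw hπ0 hP0,
    ← sum_pathWeight_indicator_take hP1 (N := N) (by omega) x]
  have hinv : Function.Involutive fun v : Fin (N + 1) → X => v ∘ Fin.rev := fun v => by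
    funext i
    simp
  refine congrArg ENNReal.ofReal (Fintype.sum_bijective _ hinv.bijective _ _ fun v => ?_)
  rw [← Set.indicator_comp_right (· ∘ Fin.rev)]
  congr 1
  funext u
  exact (pathWeight_comp_rev hrev u).symm

theorem ae_pathWeight_path_ne_zero (hZ : ∀ t (s : Set X), MeasurableSet (Z t ⁻¹' s))
    {m : ℕ} (hlaw : HasPathLaw μ Z π P m) (hπ0 : ∀ x, 0 ≤ π x) (hP0 : ∀ x y, 0 ≤ P x y) :
    ∀ᵐ ω ∂μ, pathWeight π P m (path Z m ω) ≠ 0 := by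
  rw [ae_iff, ← measureReal_eq_zero_iff]
  simp only [not_not]
  refine (measureReal_preimage_path hZ hlaw hπ0 hP0 {v | pathWeight π P m v = 0}).trans ?_
  exact sum_eq_zero fun v _ => Set.indicator_apply_eq_zero.2 id

theorem setIntegral_increment_eq_zero [CompleteSpace Y]
    (hZ : ∀ t (s : Set X), MeasurableSet (Z t ⁻¹' s)) {M : ℕ} (hlaw : HasPathLaw μ Z π P (M + 1))
    (hπ0 : ∀ x, 0 ≤ π x) (hP0 : ∀ x y, 0 ≤ P x y) (hP1 : ∀ x, ∑ y, P x y = 1) (f : X → Y)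
    {s : Set Ω} (hs : MeasurableSet[pastSigma Z M] s) :
    ∫ ω in s, (f (Z (M + 1) ω) - markovAvg P f (Z M ω)) ∂μ = 0 := by
  rw [pastSigma_eq_comap_path] at hs
  obtain ⟨S, -, rfl⟩ := hs
  rw [← integral_indicator (measurable_path hZ M trivial)]
  have hind : (path Z M ⁻¹' S).indicator (fun ω => f (Z (M + 1) ω) - markovAvg P f (Z M ω)) =
      fun ω => ((Fin.init : (Fin (M + 2) → X) → Fin (M + 1) → X) ⁻¹' S).indicator
        (fun v => f (v (Fin.last (M + 1))) - markovAvg P f (v (Fin.last M).castSucc))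
        (path Z (M + 1) ω) :=
    funext fun ω => Set.indicator_comp_right (path Z (M + 1)) (s := Fin.init ⁻¹' S)
      (g := fun v => f (v (Fin.last (M + 1))) - markovAvg P f (v (Fin.last M).castSucc))
  rw [hind, integral_comp_path hZ hlaw hπ0 hP0]
  exact sum_pathWeight_smul_indicator_increment hP1 S f

theorem ae_norm_increment_le [PseudoMetricSpace X]
    (hZ : ∀ t (s : Set X), MeasurableSet (Z t ⁻¹' s)) {M : ℕ} (hlaw : HasPathLaw μ Z π P (M + 1))
    (hπ0 : ∀ x, 0 ≤ π x) (hP0 : ∀ x y, 0 ≤ P x y) (hP1 : ∀ x, ∑ y, P x y = 1)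
    (hrev : ∀ x y, π x * P x y = π y * P y x) (hdist : ∀ x y, π x * P x y ≠ 0 → dist x y ≤ 1)
    {f : X → Y} {K : NNReal} (hK : LipschitzWith K f) :
    ∀ᵐ ω ∂μ, ‖f (Z (M + 1) ω) - markovAvg P f (Z M ω)‖ ≤ 2 * K :=
  (ae_pathWeight_path_ne_zero hZ hlaw hπ0 hP0).mono fun _ hω =>
    norm_increment_le hP0 hP1 hrev hdist hK hω

end PathLaw

theorem dist_le_one_of_mul_ne_zero [PseudoMetricSpace X] {Ω : Type*} [MeasurableSpace Ω]
    {μ : Measure Ω} {Z : ℕ → Ω → X} (hlaw : HasPathLaw μ Z π P 1) (hπ0 : ∀ x, 0 ≤ π x)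
    (hP0 : ∀ x y, 0 ≤ P x y) (hstep : ∀ᵐ ω ∂μ, dist (Z 0 ω) (Z 1 ω) ≤ 1) {x y : X}
    (hxy : π x * P x y ≠ 0) : dist x y ≤ 1 := by
  by_contra hfar
  have hnull : μ {ω | ∀ i : Fin 2, Z i ω = ![x, y] i} = 0 := by
    refine measure_mono_null (fun ω hω => ?_) (ae_iff.1 hstep)
    have h0 := hω 0
    have h1 := hω 1
    simp only [Fin.isValue, Fin.val_zero, Fin.val_one, Matrix.cons_val_zero,
      Matrix.cons_val_one] at h0 h1
    simpa [h0, h1] using hfar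
  rw [hlaw, ENNReal.ofReal_eq_zero] at hnull
  exact hxy (le_antisymm (by simpa [pathWeight] using hnull) (mul_nonneg (hπ0 x) (hP0 x y)))

section Martingale

variable {Ω : Type*} {Y : Type*} [NormedAddCommGroup Y] [NormedSpace ℝ Y]

def evenMartingale [Fintype X] (P : X → X → ℝ) (f : X → Y) (Z : ℕ → Ω → X) (t : ℕ) (ω : Ω) : Y :=
  ∑ s ∈ range t, (f (Z (2 * s + 2) ω) - markovAvg P f (Z (2 * s + 1) ω))

variable [Fintype X] {Z : ℕ → Ω → X}

theorem evenMartingale_succ (f : X → Y) (t : ℕ) (ω : Ω) :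
    evenMartingale P f Z (t + 1) ω =
      evenMartingale P f Z t ω + (f (Z (2 * t + 2) ω) - markovAvg P f (Z (2 * t + 1) ω)) :=
  sum_range_succ _ _

theorem evenMartingale_sub_evenMartingale_reverse (f : X → Y) (n : ℕ) (ω : Ω) :
    evenMartingale P f Z n ω - evenMartingale P f (fun i => Z (2 * n - i)) n ω =
      f (Z (2 * n) ω) - f (Z 0 ω) := by
  have hrefl := sum_range_reflect
    (fun s => f (Z (2 * n - (2 * s + 2)) ω) - markovAvg P f (Z (2 * n - (2 * s + 1)) ω)) n
  have htel := sum_range_sub (fun s => f (Z (2 * s) ω)) n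
  rw [mul_zero] at htel
  rw [evenMartingale, evenMartingale, ← hrefl, ← sum_sub_distrib, ← htel]
  refine sum_congr rfl fun s hs => ?_
  have hs := mem_range.1 hs
  rw [show 2 * n - (2 * (n - 1 - s) + 2) = 2 * s by omega,
    show 2 * n - (2 * (n - 1 - s) + 1) = 2 * s + 1 by omega, show 2 * (s + 1) = 2 * s + 2 by ring]
  abel

theorem stronglyMeasurable_evenMartingale (f : X → Y) (t : ℕ) :
    StronglyMeasurable[pastSigma Z (2 * t)] (evenMartingale P f Z t) :=
  Finset.stronglyMeasurable_fun_sum _ fun s hs =>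
    have hs : s < t := mem_range.1 hs
    stronglyMeasurable_comp_path (2 * t) fun v =>
      f (v ⟨2 * s + 2, by omega⟩) - markovAvg P f (v ⟨2 * s + 1, by omega⟩)

variable [MeasurableSpace Ω] {μ : Measure Ω} [IsFiniteMeasure μ]

theorem integrable_evenMartingale (hZ : ∀ t (s : Set X), MeasurableSet (Z t ⁻¹' s)) (f : X → Y)
    (t : ℕ) : Integrable (evenMartingale P f Z t) μ :=
  integrable_finsetSum _ fun s hs =>
    have hs : s < t := mem_range.1 hs
    integrable_comp_path hZ (2 * t) fun v =>
      f (v ⟨2 * s + 2, by omega⟩) - markovAvg P f (v ⟨2 * s + 1, by omega⟩)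

theorem condExp_evenMartingale_succ [CompleteSpace Y]
    (hZ : ∀ t (s : Set X), MeasurableSet (Z t ⁻¹' s)) {t : ℕ}
    (hlaw : HasPathLaw μ Z π P (2 * t + 2)) (hπ0 : ∀ x, 0 ≤ π x) (hP0 : ∀ x y, 0 ≤ P x y)
    (hP1 : ∀ x, ∑ y, P x y = 1) (f : X → Y) :
    μ[evenMartingale P f Z (t + 1) | pastSigma Z (2 * t)] =ᵐ[μ] evenMartingale P f Z t := by
  have hint := integrable_evenMartingale (μ := μ) (P := P) hZ f
  have hincr : Integrable (fun ω => f (Z (2 * t + 2) ω) - markovAvg P f (Z (2 * t + 1) ω)) μ :=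
    integrable_comp_path hZ (2 * t + 2) fun v =>
      f (v (Fin.last _)) - markovAvg P f (v (Fin.last _).castSucc)
  refine (ae_eq_condExp_of_forall_setIntegral_eq (pastSigma_le hZ (2 * t)) (hint (t + 1))
    (fun s _ _ => (hint t).integrableOn) (fun s hs _ => ?_)
    (stronglyMeasurable_evenMartingale f t).aestronglyMeasurable).symm
  simp only [evenMartingale_succ]
  rw [integral_add (hint t).integrableOn hincr.integrableOn,
    setIntegral_increment_eq_zero hZ hlaw hπ0 hP0 hP1 f (pastSigma_mono Z (by omega) s hs),
    add_zero]

end Martingale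

end ReversibleChain

open ReversibleChain in
theorem martingale_decomposition_general
    {X : Type*} [Fintype X] [MetricSpace X]
    {Y : Type*} [NormedAddCommGroup Y] [NormedSpace ℝ Y] [CompleteSpace Y]
    {Ω : Type*} [m0 : MeasurableSpace Ω] (μ : Measure Ω) [IsProbabilityMeasure μ]
    (Z : ℕ → Ω → X) (hZmeas : ∀ t (s : Set X), MeasurableSet (Z t ⁻¹' s))
    (π : X → ℝ) (P : X → X → ℝ)
    (hπ0 : ∀ x, 0 ≤ π x)
    (hP0 : ∀ x y, 0 ≤ P x y) (hP1 : ∀ x, ∑ y, P x y = 1)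
    (hrev : ∀ x y, π x * P x y = π y * P y x)
    (hchain : ∀ (m : ℕ) (x : Fin (m + 1) → X),
      μ {ω | ∀ i : Fin (m + 1), Z (i : ℕ) ω = x i} =
        ENNReal.ofReal (π (x 0) * ∏ i : Fin m, P (x i.castSucc) (x i.succ)))
    (hstep : ∀ᵐ ω ∂μ, dist (Z 0 ω) (Z 1 ω) ≤ 1)
    (f : X → Y) (K : NNReal) (hK : LipschitzWith K f)
    (n : ℕ) :
    ∃ A B : ℕ → Ω → Y,
      -- `A` is adapted to the natural filtration of `(Z_0, …, Z_{2n})`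
      (∀ t, StronglyMeasurable[⨆ i ∈ Finset.range (2 * t + 1),
          MeasurableSpace.comap (Z i) ⊤] (A t)) ∧
      -- `B` is adapted to the natural filtration of `(Z_{2n}, Z_{2n-1}, …, Z_0)`
      (∀ t, StronglyMeasurable[⨆ i ∈ Finset.range (2 * t + 1),
          MeasurableSpace.comap (Z (2 * n - i)) ⊤] (B t)) ∧
      -- `A` is a (forward) martingale
      (∀ t, t < n →
        μ[A (t + 1)|⨆ i ∈ Finset.range (2 * t + 1),
            MeasurableSpace.comap (Z i) ⊤] =ᵐ[μ] A t) ∧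
      -- `B` is a (backward) martingale
      (∀ t, t < n →
        μ[B (t + 1)|⨆ i ∈ Finset.range (2 * t + 1),
            MeasurableSpace.comap (Z (2 * n - i)) ⊤] =ᵐ[μ] B t) ∧
      -- (1) the decomposition
      (∀ᵐ ω ∂μ, f (Z (2 * n) ω) - f (Z 0 ω) = A n ω - B n ω) ∧
      -- (2) bounded increments
      (∀ t, 1 ≤ t → t ≤ n →
        ∀ᵐ ω ∂μ, ‖A t ω - A (t - 1) ω‖ ≤ 2 * K ∧ ‖B t ω - B (t - 1) ω‖ ≤ 2 * K) := by
  have hlaw : ∀ m, HasPathLaw μ Z π P m := hchain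
  have hlawRev : ∀ m ≤ 2 * n, HasPathLaw μ (fun i => Z (2 * n - i)) π P m := fun m hm =>
    (hlaw (2 * n)).reverse hZmeas hπ0 hP0 hP1 hrev hm
  have hZrev : ∀ t (s : Set X), MeasurableSet (Z (2 * n - t) ⁻¹' s) := fun t => hZmeas _
  have hdist : ∀ x y, π x * P x y ≠ 0 → dist x y ≤ 1 := fun _ _ =>
    dist_le_one_of_mul_ne_zero (hlaw 1) hπ0 hP0 hstep
  refine ⟨evenMartingale P f Z, evenMartingale P f (fun i => Z (2 * n - i)),
    stronglyMeasurable_evenMartingale f, stronglyMeasurable_evenMartingale f,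
    fun t _ => condExp_evenMartingale_succ hZmeas (hlaw _) hπ0 hP0 hP1 f,
    fun t ht => condExp_evenMartingale_succ hZrev (hlawRev _ (by omega)) hπ0 hP0 hP1 f,
    ae_of_all _ fun ω => (evenMartingale_sub_evenMartingale_reverse f n ω).symm, ?_⟩
  rintro t ht htn
  obtain ⟨t, rfl⟩ := Nat.exists_eq_add_of_le' ht
  filter_upwards [ae_norm_increment_le hZmeas (hlaw _) hπ0 hP0 hP1 hrev hdist hK,
    ae_norm_increment_le hZrev (hlawRev (2 * t + 2) (by omega)) hπ0 hP0 hP1 hrev hdist hK]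
    with ω hA hB
  simp only [add_tsub_cancel_right, evenMartingale_succ, add_sub_cancel_left]
  exact ⟨hA, hB⟩

/-- **Martingale decomposition for stationary reversible chains** (Lemma 2.1 / `lem:npss`).

Let `(X,d)` be a finite metric space, `Y` a real normed vector space (we assume completeness,
as is needed to speak about conditional expectations), and `Z` a stationary reversible Markov
chain on `X` (with initial distribution `π`, transition kernel `P`, satisfying detailed balance)
such that `d(Z₀,Z₁) ≤ 1` almost surely.  Then for every `n ≥ 1` and every `f : X → Y` with
Lipschitz constant `K` there are a forward martingale `A` (w.r.t. the natural filtration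
`σ(Z_0,…,Z_{2t})`) and a backward martingale `B` (w.r.t. the natural filtration of the reversed
sequence, `σ(Z_{2n},…,Z_{2n-2t})`) such that `f(Z_{2n}) - f(Z_0) = A_n - B_n` and all increments
of `A` and of `B` are bounded in norm by `2‖f‖_Lip`. -/
theorem martingale_decomposition
    {X : Type*} [Fintype X] [MetricSpace X]
    {Y : Type*} [NormedAddCommGroup Y] [NormedSpace ℝ Y] [CompleteSpace Y]
    {Ω : Type*} [m0 : MeasurableSpace Ω] (μ : Measure Ω) [IsProbabilityMeasure μ]
    (Z : ℕ → Ω → X) (hZmeas : ∀ t (s : Set X), MeasurableSet (Z t ⁻¹' s))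
    (π : X → ℝ) (P : X → X → ℝ)
    (hπ0 : ∀ x, 0 ≤ π x) (hπ1 : ∑ x, π x = 1)
    (hP0 : ∀ x y, 0 ≤ P x y) (hP1 : ∀ x, ∑ y, P x y = 1)
    (hstat : ∀ y, ∑ x, π x * P x y = π y)
    (hrev : ∀ x y, π x * P x y = π y * P y x)
    (hchain : ∀ (m : ℕ) (x : Fin (m + 1) → X),
      μ {ω | ∀ i : Fin (m + 1), Z (i : ℕ) ω = x i} =
        ENNReal.ofReal (π (x 0) * ∏ i : Fin m, P (x i.castSucc) (x i.succ)))
    (hstep : ∀ᵐ ω ∂μ, dist (Z 0 ω) (Z 1 ω) ≤ 1)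
    (f : X → Y) (K : NNReal) (hK : LipschitzWith K f)
    (n : ℕ) (hn : 1 ≤ n) :
    ∃ A B : ℕ → Ω → Y,
      -- `A` is adapted to the natural filtration of `(Z_0, …, Z_{2n})`
      (∀ t, StronglyMeasurable[⨆ i ∈ Finset.range (2 * t + 1),
          MeasurableSpace.comap (Z i) ⊤] (A t)) ∧
      -- `B` is adapted to the natural filtration of `(Z_{2n}, Z_{2n-1}, …, Z_0)`
      (∀ t, StronglyMeasurable[⨆ i ∈ Finset.range (2 * t + 1),
          MeasurableSpace.comap (Z (2 * n - i)) ⊤] (B t)) ∧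
      -- `A` is a (forward) martingale
      (∀ t, t < n →
        μ[A (t + 1)|⨆ i ∈ Finset.range (2 * t + 1),
            MeasurableSpace.comap (Z i) ⊤] =ᵐ[μ] A t) ∧
      -- `B` is a (backward) martingale
      (∀ t, t < n →
        μ[B (t + 1)|⨆ i ∈ Finset.range (2 * t + 1),
            MeasurableSpace.comap (Z (2 * n - i)) ⊤] =ᵐ[μ] B t) ∧
      -- (1) the decomposition
      (∀ᵐ ω ∂μ, f (Z (2 * n) ω) - f (Z 0 ω) = A n ω - B n ω) ∧
      -- (2) bounded increments
      (∀ t, 1 ≤ t → t ≤ n →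
        ∀ᵐ ω ∂μ, ‖A t ω - A (t - 1) ω‖ ≤ 2 * K ∧ ‖B t ω - B (t - 1) ω‖ ≤ 2 * K) :=
  martingale_decomposition_general (m0 := m0) μ Z hZmeas π P hπ0 hP0 hP1 hrev hchain hstep f K hK n
end
end

section
/- Let (X,d) be a finite metric space, H a real Hilbert space, and {Z_t}_{t≥0} a stationary reversible Markov chain on X satisfying d(Z_0,Z_1) ≤ 1 almost surely. Then for every map f : X → H, every n ≥ 1, and every λ > 0, Pr(‖f(Z_{2n}) − f(Z_0)‖_H ≥ λ) ≤ 4 exp(−λ² / (32 n ‖f‖_Lip²)). -/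
/-!
Put `g = P f` and `M(ρ) = ∑ₛ (f(ρₛ₊₁) - g(ρₛ))` for a path `ρ` of length `m`. Along the chain,
`M` is a martingale, and by reversibility so is `M` of the time-reversed path, which has the same
law. Their difference telescopes to `(f + g)(Zₘ) - (f + g)(Z₀)`, so
`2 (f(Zₘ) - f(Z₀))` is the difference of the two martingales up to two boundary terms
`f - g` of norm at most `K`. The martingale increments are bounded by `2K`, and Pinelis' Hilbert
space form of Azuma's inequality bounds the tail of each martingale at `t = λ - K` by
`2 exp(-t² / (8 m K²))`. Its key step is `E cosh(c‖v + D‖) ≤ cosh(c‖v‖) cosh(c a)` for a centred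
`D` with `‖D‖ ≤ a`, which comes from the convexity of `s ↦ cosh(c √s)` applied to
`‖v + D‖² ≤ ‖v‖² + a² + 2⟪v, D⟫`. For `m = 2n` this gives the claim once `λ² > 32 n K²`;
otherwise the right-hand side is at least `1`.
-/

open Finset MeasureTheory
open Real (cosh sinh exp)
open scoped Nat RealInnerProductSpace

namespace Real

theorem convexOn_cosh_mul_sqrt (c : ℝ) : ConvexOn ℝ (Set.Ici 0) fun s => cosh (c * √s) := by
  set coeff : ℕ → ℝ := fun k => (c ^ 2) ^ k / (2 * k)!
  have hseries : ∀ s, 0 ≤ s → HasSum (fun k => coeff k * s ^ k) (cosh (c * √s)) := fun s hs => by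
    convert hasSum_cosh (c * √s) using 2 with k
    rw [pow_mul, mul_pow, sq_sqrt hs, mul_pow]
    ring
  have hterm : ∀ k, ConvexOn ℝ (Set.Ici 0) fun s : ℝ => coeff k * s ^ k := fun k =>
    (convexOn_pow k).smul (by positivity)
  refine ⟨convex_Ici 0, fun x hx y hy a b ha hb hab => ?_⟩
  exact hasSum_le (fun k => (hterm k).2 hx hy ha hb hab)
    (hseries _ (by simp only [Set.mem_Ici] at hx hy ⊢; positivity))
    (((hseries x hx).mul_left a).add ((hseries y hy).mul_left b))

theorem cosh_mul_abs (c x : ℝ) : cosh (c * |x|) = cosh (c * x) := by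
  rcases abs_choice x with h | h <;> simp [h]

theorem one_le_two_mul_exp_neg_mul_cosh {c t s : ℝ} (hc : 0 ≤ c) (hts : t ≤ s) :
    1 ≤ 2 * exp (-(c * t)) * cosh (c * s) := by
  have h : exp (c * t) ≤ 2 * cosh (c * s) := by
    rw [cosh_eq]
    linarith [exp_le_exp.2 (mul_le_mul_of_nonneg_left hts hc), exp_pos (-(c * s))]
  calc (1 : ℝ) = exp (-(c * t)) * exp (c * t) := by rw [← exp_add, neg_add_cancel, exp_zero]
    _ ≤ exp (-(c * t)) * (2 * cosh (c * s)) := by gcongr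
    _ = 2 * exp (-(c * t)) * cosh (c * s) := by ring

theorem one_le_four_mul_exp_neg {x : ℝ} (hx : x ≤ 1) : 1 ≤ 4 * exp (-x) := by
  rw [exp_neg, ← div_eq_mul_inv, one_le_div (exp_pos x)]
  exact (exp_le_exp.2 hx).trans (exp_one_lt_d9.trans (by norm_num)).le

end Real

theorem le_and_sq_div_le_sub_sq_div {lam K : ℝ} {n : ℕ} (hlam : 0 < lam)
    (h : 1 < lam ^ 2 / (32 * n * K ^ 2)) :
    K ≤ lam ∧ lam ^ 2 / (32 * n * K ^ 2) ≤ (lam - K) ^ 2 / (16 * n * K ^ 2) := by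
  have hD : 0 < 32 * (n : ℝ) * K ^ 2 := by
    refine (by positivity : 0 ≤ 32 * (n : ℝ) * K ^ 2).lt_of_ne' fun h0 => ?_
    rw [h0, div_zero] at h
    exact absurd h (by norm_num)
  have hn : (1 : ℝ) ≤ n := Nat.one_le_cast.2 (Nat.pos_of_ne_zero fun h0 => by simp [h0] at hD)
  rw [one_lt_div hD] at h
  have hK : 32 * K ^ 2 < lam ^ 2 := by nlinarith [sq_nonneg K]
  have hKlam : K ≤ lam := by nlinarith
  refine ⟨hKlam, ?_⟩
  rw [div_le_div_iff₀ hD (by linarith)]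
  nlinarith [sq_nonneg K, sq_nonneg (lam - 4 * K)]

theorem Fin.sum_succ_sub_castSucc {G : Type*} [AddCommGroup G] {m : ℕ} (g : Fin (m + 1) → G) :
    ∑ i : Fin m, (g i.succ - g i.castSucc) = g (Fin.last m) - g 0 := by
  rw [sum_sub_distrib, sub_eq_sub_iff_add_eq_add, add_comm _ (g 0), ← Fin.sum_univ_succ,
    add_comm (g _), ← Fin.sum_univ_castSucc]

theorem sum_filter_le_sum_filter_add_sum_filter {ι : Type*} [Fintype ι] {w : ι → ℝ}
    (hw : ∀ i, 0 ≤ w i) {p q r : ι → Prop} [DecidablePred p] [DecidablePred q]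
    [DecidablePred r] (h : ∀ i, w i ≠ 0 → p i → q i ∨ r i) :
    ∑ i with p i, w i ≤ ∑ i with q i, w i + ∑ i with r i, w i := by
  simp only [sum_filter, ← sum_add_distrib]
  refine sum_le_sum fun i _ => ?_
  rcases eq_or_ne (w i) 0 with h0 | h0
  · simp [h0]
  have hi := h i h0
  split_ifs <;> first | linarith [hw i] | tauto

theorem sum_filter_le_two_mul_exp_neg_mul_sum_cosh {ι : Type*} [Fintype ι] {w : ι → ℝ}
    (hw : ∀ i, 0 ≤ w i) (F : ι → ℝ) {c : ℝ} (hc : 0 ≤ c) (t : ℝ) [DecidablePred (t ≤ F ·)] :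
    ∑ i with t ≤ F i, w i ≤ 2 * exp (-(c * t)) * ∑ i, w i * cosh (c * F i) := by
  calc ∑ i with t ≤ F i, w i
      ≤ ∑ i with t ≤ F i, w i * (2 * exp (-(c * t)) * cosh (c * F i)) :=
        sum_le_sum fun i hi => le_mul_of_one_le_right (hw i)
          (Real.one_le_two_mul_exp_neg_mul_cosh hc (mem_filter.1 hi).2)
    _ ≤ ∑ i, w i * (2 * exp (-(c * t)) * cosh (c * F i)) :=
        sum_le_sum_of_subset_of_nonneg (filter_subset _ _) fun i _ _ =>
          mul_nonneg (hw i) (by positivity)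
    _ = 2 * exp (-(c * t)) * ∑ i, w i * cosh (c * F i) := by
        rw [mul_sum]
        exact sum_congr rfl fun i _ => by ring

section Pinelis

variable {H : Type*} [NormedAddCommGroup H] [InnerProductSpace ℝ H]

-- The second term averages out against a centred `d`; when `‖v‖ * a = 0` it is `0` (`x / 0 = 0`).
theorem cosh_mul_norm_add_le (c : ℝ) (v : H) {d : H} {a : ℝ} (hd : ‖d‖ ≤ a) :
    cosh (c * ‖v + d‖) ≤ cosh (c * ‖v‖) * cosh (c * a) +
      ⟪v, d⟫ * (sinh (c * ‖v‖) * sinh (c * a) / (‖v‖ * a)) := by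
  set r := ‖v‖
  set w := ⟪v, d⟫
  have hr : 0 ≤ r := norm_nonneg v
  have ha : 0 ≤ a := (norm_nonneg d).trans hd
  rcases (mul_nonneg hr ha).eq_or_lt with hra | hra
  · have hsinh : sinh (c * r) * sinh (c * a) = 0 := by
      rcases mul_eq_zero.1 hra.symm with h | h <;> simp [h]
    rw [← hra, div_zero, mul_zero, add_zero]
    calc cosh (c * ‖v + d‖) ≤ cosh (c * (r + a)) := by
          rw [Real.cosh_le_cosh, abs_mul, abs_mul, abs_of_nonneg (norm_nonneg _),
            abs_of_nonneg (add_nonneg hr ha)]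
          gcongr
          exact (norm_add_le v d).trans (add_le_add le_rfl hd)
      _ = cosh (c * r) * cosh (c * a) := by rw [mul_add, Real.cosh_add, hsinh, add_zero]
  -- `‖v + d‖² ≤ r² + a² + 2w`, which is a convex combination of `(r + a)²` and `(r - a)²`
  have hr₀ : r ≠ 0 := left_ne_zero_of_mul hra.ne'
  have ha₀ : a ≠ 0 := right_ne_zero_of_mul hra.ne'
  have hw : |w| ≤ r * a := (abs_real_inner_le_norm v d).trans (by gcongr)
  set θp := (r * a + w) / (2 * (r * a))
  set θm := (r * a - w) / (2 * (r * a))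
  have hθp : 0 ≤ θp := div_nonneg (by linarith [neg_abs_le w]) (by positivity)
  have hθm : 0 ≤ θm := div_nonneg (by linarith [le_abs_self w]) (by positivity)
  have hθ : θp + θm = 1 := by simp only [θp, θm]; field_simp; ring
  have hcomb : θp * (r + a) ^ 2 + θm * (r - a) ^ 2 = r ^ 2 + a ^ 2 + 2 * w := by
    simp only [θp, θm]; field_simp; ring
  have hnorm : ‖v + d‖ ^ 2 ≤ θp * (r + a) ^ 2 + θm * (r - a) ^ 2 := by
    rw [hcomb, norm_add_sq_real]
    nlinarith [norm_nonneg d]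
  have hconv :=
    (Real.convexOn_cosh_mul_sqrt c).2 (sq_nonneg (r + a)) (sq_nonneg (r - a)) hθp hθm hθ
  simp only [smul_eq_mul, Real.sqrt_sq_eq_abs, Real.cosh_mul_abs] at hconv
  calc cosh (c * ‖v + d‖) = cosh (c * √(‖v + d‖ ^ 2)) := by rw [Real.sqrt_sq (norm_nonneg _)]
    _ ≤ cosh (c * √(θp * (r + a) ^ 2 + θm * (r - a) ^ 2)) := by
        rw [Real.cosh_le_cosh, abs_mul, abs_mul, abs_of_nonneg (Real.sqrt_nonneg _),
          abs_of_nonneg (Real.sqrt_nonneg _)]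
        gcongr
    _ ≤ θp * cosh (c * (r + a)) + θm * cosh (c * (r - a)) := hconv
    _ = cosh (c * r) * cosh (c * a) + w * (sinh (c * r) * sinh (c * a) / (r * a)) := by
        rw [mul_add, mul_sub, Real.cosh_add, Real.cosh_sub]
        simp only [θp, θm]
        field_simp
        ring

theorem sum_mul_cosh_mul_norm_add_le {ι : Type*} [Fintype ι] {p : ι → ℝ} {d : ι → H}
    (c : ℝ) (v : H) {a : ℝ} (hp0 : ∀ i, 0 ≤ p i) (hp1 : ∑ i, p i = 1)
    (hmean : ∑ i, p i • d i = 0) (hd : ∀ i, p i ≠ 0 → ‖d i‖ ≤ a) :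
    ∑ i, p i * cosh (c * ‖v + d i‖) ≤ cosh (c * ‖v‖) * cosh (c * a) := by
  set κ := sinh (c * ‖v‖) * sinh (c * a) / (‖v‖ * a)
  have hinner : ∑ i, p i * ⟪v, d i⟫ = 0 := by
    simpa only [inner_sum, real_inner_smul_right, inner_zero_right] using
      congr_arg (⟪v, ·⟫) hmean
  calc ∑ i, p i * cosh (c * ‖v + d i‖)
      ≤ ∑ i, p i * (cosh (c * ‖v‖) * cosh (c * a) + ⟪v, d i⟫ * κ) := by
        refine sum_le_sum fun i _ => ?_
        rcases eq_or_ne (p i) 0 with h | h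
        · simp [h]
        · exact mul_le_mul_of_nonneg_left (cosh_mul_norm_add_le c v (hd i h)) (hp0 i)
    _ = (∑ i, p i) * (cosh (c * ‖v‖) * cosh (c * a)) + (∑ i, p i * ⟪v, d i⟫) * κ := by
        simp only [mul_add, sum_add_distrib, sum_mul, mul_assoc]
    _ = cosh (c * ‖v‖) * cosh (c * a) := by rw [hp1, hinner]; ring

end Pinelis

section Paths

variable {X H : Type*} [NormedAddCommGroup H] [InnerProductSpace ℝ H]

def pathWeight (π : X → ℝ) (P : X → X → ℝ) {m : ℕ} (ρ : Fin (m + 1) → X) : ℝ :=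
  π (ρ 0) * ∏ i : Fin m, P (ρ i.castSucc) (ρ i.succ)

/-- The function `P f` of the paper. -/
def transitionMean [Fintype X] (P : X → X → ℝ) (f : X → H) (x : X) : H :=
  ∑ y, P x y • f y

def pathMartingale [Fintype X] (P : X → X → ℝ) (f : X → H) {m : ℕ} (ρ : Fin (m + 1) → X) : H :=
  ∑ s : Fin m, (f (ρ s.succ) - transitionMean P f (ρ s.castSucc))

variable {π : X → ℝ} {P : X → X → ℝ}

theorem pathWeight_nonneg (hπ0 : ∀ x, 0 ≤ π x) (hP0 : ∀ x y, 0 ≤ P x y) {m : ℕ}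
    (ρ : Fin (m + 1) → X) : 0 ≤ pathWeight π P ρ :=
  mul_nonneg (hπ0 _) (prod_nonneg fun _ _ => hP0 _ _)

theorem pathWeight_snoc {m : ℕ} (σ : Fin (m + 1) → X) (y : X) :
    pathWeight π P (Fin.snoc σ y : Fin (m + 2) → X) =
      pathWeight π P σ * P (σ (Fin.last m)) y := by
  simp [pathWeight, Fin.prod_univ_castSucc, Fin.succ_castSucc, -Fin.castSucc_succ, mul_assoc]

theorem pathWeight_eq_mul_prod_reverse (hrev : ∀ x y, π x * P x y = π y * P y x) {m : ℕ}
    (ρ : Fin (m + 1) → X) :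
    pathWeight π P ρ = π (ρ (Fin.last m)) * ∏ i : Fin m, P (ρ i.succ) (ρ i.castSucc) := by
  induction m with
  | zero => rfl
  | succ m ih =>
    obtain ⟨σ, y, rfl⟩ : ∃ σ y, ρ = Fin.snoc σ y :=
      ⟨Fin.init ρ, ρ (Fin.last _), (Fin.snoc_init_self ρ).symm⟩
    rw [pathWeight_snoc, ih, Fin.prod_univ_castSucc]
    simp only [Fin.snoc_last, Fin.snoc_castSucc, Fin.succ_castSucc, Fin.succ_last]
    linear_combination (∏ i : Fin m, P (σ i.succ) (σ i.castSucc)) * hrev (σ (Fin.last m)) y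

theorem pathWeight_comp_rev (hrev : ∀ x y, π x * P x y = π y * P y x) {m : ℕ}
    (ρ : Fin (m + 1) → X) : pathWeight π P (ρ ∘ Fin.rev) = pathWeight π P ρ := by
  rw [pathWeight_eq_mul_prod_reverse hrev ρ, pathWeight]
  simp only [Function.comp_apply, Fin.rev_zero, Fin.rev_castSucc, Fin.rev_succ]
  congr 1
  exact Fintype.prod_equiv Fin.revPerm _ _ fun i => rfl

variable [Fintype X]

theorem sum_pathWeight_filter_comp_rev (hrev : ∀ x y, π x * P x y = π y * P y x) {m : ℕ}
    (p : (Fin (m + 1) → X) → Prop) [DecidablePred p] :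
    ∑ ρ : Fin (m + 1) → X with p (ρ ∘ Fin.rev), pathWeight π P ρ =
      ∑ ρ : Fin (m + 1) → X with p ρ, pathWeight π P ρ :=
  sum_equiv (Function.Involutive.toPerm (· ∘ Fin.rev) fun ρ => by ext; simp)
    (fun _ => by simp only [mem_filter, mem_univ, true_and]; rfl)
    fun ρ _ => (pathWeight_comp_rev hrev ρ).symm

theorem pos_of_pathWeight_ne_zero (hπ0 : ∀ x, 0 ≤ π x) (hP0 : ∀ x y, 0 ≤ P x y)
    (hstat : ∀ y, ∑ x, π x * P x y = π y) {m : ℕ} {ρ : Fin (m + 1) → X}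
    (h : pathWeight π P ρ ≠ 0) (i : Fin (m + 1)) : 0 < π (ρ i) := by
  obtain ⟨h0, hprod⟩ := mul_ne_zero_iff.1 h
  induction i using Fin.induction with
  | zero => exact (hπ0 _).lt_of_ne' h0
  | succ s ih =>
    have hs : 0 < P (ρ s.castSucc) (ρ s.succ) :=
      (hP0 _ _).lt_of_ne' (prod_ne_zero_iff.1 hprod s (mem_univ s))
    calc 0 < π (ρ s.castSucc) * P (ρ s.castSucc) (ρ s.succ) := mul_pos ih hs
      _ ≤ ∑ x, π x * P x (ρ s.succ) :=
        single_le_sum (fun x _ => mul_nonneg (hπ0 x) (hP0 x _)) (mem_univ _)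
      _ = π (ρ s.succ) := hstat _

theorem sum_smul_sub_transitionMean (hP1 : ∀ x, ∑ y, P x y = 1) (f : X → H) (x : X) :
    ∑ y, P x y • (f y - transitionMean P f x) = 0 := by
  simp only [smul_sub, sum_sub_distrib, ← sum_smul, hP1, one_smul, transitionMean, sub_self]

theorem norm_sub_transitionMean_le (hP0 : ∀ x y, 0 ≤ P x y) (hP1 : ∀ x, ∑ y, P x y = 1)
    {f : X → H} {x : X} {K : ℝ} (hf : ∀ y, P x y ≠ 0 → ‖f y - f x‖ ≤ K) :
    ‖f x - transitionMean P f x‖ ≤ K := by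
  calc ‖f x - transitionMean P f x‖ = ‖∑ y, P x y • (f y - f x)‖ := by
        rw [norm_sub_rev]
        simp only [transitionMean, smul_sub, sum_sub_distrib, ← sum_smul, hP1, one_smul]
    _ ≤ ∑ y, P x y * K := by
        refine (norm_sum_le _ _).trans (sum_le_sum fun y _ => ?_)
        rw [norm_smul, Real.norm_of_nonneg (hP0 x y)]
        rcases eq_or_ne (P x y) 0 with h | h
        · simp [h]
        · exact mul_le_mul_of_nonneg_left (hf y h) (hP0 x y)
    _ = K := by rw [← sum_mul, hP1, one_mul]

theorem pathMartingale_snoc (f : X → H) {m : ℕ} (σ : Fin (m + 1) → X) (y : X) :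
    pathMartingale P f (Fin.snoc σ y : Fin (m + 2) → X) =
      pathMartingale P f σ + (f y - transitionMean P f (σ (Fin.last m))) := by
  simp [pathMartingale, Fin.sum_univ_castSucc, Fin.succ_castSucc, -Fin.castSucc_succ,
    sub_add_sub_comm]

theorem pathMartingale_sub_pathMartingale_comp_rev (f : X → H) {m : ℕ} (ρ : Fin (m + 1) → X) :
    pathMartingale P f ρ - pathMartingale P f (ρ ∘ Fin.rev) =
      (f + transitionMean P f) (ρ (Fin.last m)) - (f + transitionMean P f) (ρ 0) := by
  have hrev : pathMartingale P f (ρ ∘ Fin.rev) =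
      ∑ s : Fin m, (f (ρ s.castSucc) - transitionMean P f (ρ s.succ)) := by
    rw [pathMartingale, ← Fintype.sum_equiv Fin.revPerm _ _ fun s => rfl]
    simp [Fin.rev_succ, Fin.rev_castSucc]
  rw [hrev, pathMartingale, ← sum_sub_distrib,
    ← Fin.sum_succ_sub_castSucc fun i => (f + transitionMean P f) (ρ i)]
  congr 1 with s
  simp only [Pi.add_apply]
  abel

theorem two_mul_norm_sub_le {f : X → H} {K : ℝ} {m : ℕ} {ρ : Fin (m + 1) → X}
    (hK : ∀ i, ‖f (ρ i) - transitionMean P f (ρ i)‖ ≤ K) :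
    2 * ‖f (ρ (Fin.last m)) - f (ρ 0)‖ ≤
      ‖pathMartingale P f ρ‖ + ‖pathMartingale P f (ρ ∘ Fin.rev)‖ + 2 * K := by
  set M := pathMartingale P f ρ
  set N := pathMartingale P f (ρ ∘ Fin.rev)
  set u := f (ρ (Fin.last m)) - transitionMean P f (ρ (Fin.last m))
  set v := f (ρ 0) - transitionMean P f (ρ 0)
  have hdecomp : (2 : ℝ) • (f (ρ (Fin.last m)) - f (ρ 0)) = M - N + u - v := by
    rw [pathMartingale_sub_pathMartingale_comp_rev, two_smul, Pi.add_apply, Pi.add_apply]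
    simp only [u, v]
    abel
  calc 2 * ‖f (ρ (Fin.last m)) - f (ρ 0)‖ = ‖M - N + u - v‖ := by
        rw [← hdecomp, norm_smul, Real.norm_two]
    _ ≤ ‖M‖ + ‖N‖ + 2 * K := by
        linarith [norm_sub_le (M - N + u) v, norm_add_le (M - N) u, norm_sub_le M N,
          hK (Fin.last m), hK 0]

theorem sum_pathWeight_mul_cosh_le (hπ0 : ∀ x, 0 ≤ π x) (hπ1 : ∑ x, π x = 1)
    (hP0 : ∀ x y, 0 ≤ P x y) (hP1 : ∀ x, ∑ y, P x y = 1) (hstat : ∀ y, ∑ x, π x * P x y = π y)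
    {f : X → H} {a : ℝ} (c : ℝ)
    (hbd : ∀ x y, 0 < π x → P x y ≠ 0 → ‖f y - transitionMean P f x‖ ≤ a) (m : ℕ) :
    ∑ ρ : Fin (m + 1) → X, pathWeight π P ρ * cosh (c * ‖pathMartingale P f ρ‖) ≤
      cosh (c * a) ^ m := by
  induction m with
  | zero =>
    simp only [pathWeight, pathMartingale, univ_eq_empty, prod_empty, sum_empty, norm_zero,
      mul_zero, Real.cosh_zero, mul_one, pow_zero]
    rw [← hπ1]
    exact (Fintype.sum_equiv (Equiv.funUnique (Fin 1) X) _ _ fun _ => rfl).le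
  | succ m ih =>
    rw [← (Fin.snocEquiv fun _ => X).sum_comp, Fintype.sum_prod_type_right]
    simp only [Fin.snocEquiv, Equiv.coe_fn_mk, pathWeight_snoc, pathMartingale_snoc]
    calc ∑ σ : Fin (m + 1) → X, ∑ y, pathWeight π P σ * P (σ (Fin.last m)) y *
          cosh (c * ‖pathMartingale P f σ + (f y - transitionMean P f (σ (Fin.last m)))‖)
        ≤ ∑ σ : Fin (m + 1) → X,
            pathWeight π P σ * cosh (c * ‖pathMartingale P f σ‖) * cosh (c * a) := by
          refine sum_le_sum fun σ _ => ?_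
          rcases eq_or_ne (pathWeight π P σ) 0 with h | h
          · simp [h]
          simp only [mul_assoc, ← mul_sum]
          refine mul_le_mul_of_nonneg_left ?_ (pathWeight_nonneg hπ0 hP0 σ)
          exact sum_mul_cosh_mul_norm_add_le c _ (hP0 _) (hP1 _)
            (sum_smul_sub_transitionMean hP1 f _)
            fun y => hbd _ y (pos_of_pathWeight_ne_zero hπ0 hP0 hstat h _)
      _ ≤ cosh (c * a) ^ (m + 1) := by
          rw [← sum_mul, pow_succ]
          exact mul_le_mul_of_nonneg_right ih (Real.cosh_pos _).le

theorem pathMartingale_tail_le (hπ0 : ∀ x, 0 ≤ π x) (hπ1 : ∑ x, π x = 1)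
    (hP0 : ∀ x y, 0 ≤ P x y) (hP1 : ∀ x, ∑ y, P x y = 1) (hstat : ∀ y, ∑ x, π x * P x y = π y)
    {f : X → H} {a : ℝ} (hbd : ∀ x y, 0 < π x → P x y ≠ 0 → ‖f y - transitionMean P f x‖ ≤ a)
    {t : ℝ} (ht : 0 ≤ t) (m : ℕ) :
    ∑ ρ : Fin (m + 1) → X with t ≤ ‖pathMartingale P f ρ‖, pathWeight π P ρ ≤
      2 * exp (-t ^ 2 / (2 * m * a ^ 2)) := by
  set c := t / (m * a ^ 2)
  have hexponent : -(c * t) + m * ((c * a) ^ 2 / 2) = -t ^ 2 / (2 * m * a ^ 2) := by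
    rcases eq_or_ne ((m : ℝ) * a ^ 2) 0 with h | h
    · simp [c, h, mul_assoc]
    · have hm : (m : ℝ) ≠ 0 := left_ne_zero_of_mul h
      have ha : a ≠ 0 := by rintro rfl; simp at h
      simp only [c]
      field_simp
      ring
  calc ∑ ρ : Fin (m + 1) → X with t ≤ ‖pathMartingale P f ρ‖, pathWeight π P ρ
      ≤ 2 * exp (-(c * t)) *
          ∑ ρ : Fin (m + 1) → X, pathWeight π P ρ * cosh (c * ‖pathMartingale P f ρ‖) :=
        sum_filter_le_two_mul_exp_neg_mul_sum_cosh (pathWeight_nonneg hπ0 hP0) _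
          (by positivity) t
    _ ≤ 2 * exp (-(c * t)) * exp ((c * a) ^ 2 / 2) ^ m := by
        gcongr
        exact (sum_pathWeight_mul_cosh_le hπ0 hπ1 hP0 hP1 hstat c hbd m).trans
          (pow_le_pow_left₀ (Real.cosh_pos _).le (Real.cosh_le_exp_half_sq _) m)
    _ = 2 * exp (-t ^ 2 / (2 * m * a ^ 2)) := by
        rw [← Real.exp_nat_mul, mul_assoc, ← Real.exp_add, hexponent]

theorem displacement_tail_le (hπ0 : ∀ x, 0 ≤ π x) (hπ1 : ∑ x, π x = 1)
    (hP0 : ∀ x y, 0 ≤ P x y) (hP1 : ∀ x, ∑ y, P x y = 1) (hstat : ∀ y, ∑ x, π x * P x y = π y)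
    (hrev : ∀ x y, π x * P x y = π y * P y x) {f : X → H} {K lam : ℝ}
    (hf : ∀ x y, 0 < π x * P x y → ‖f y - f x‖ ≤ K) (hKlam : K ≤ lam) (m : ℕ) :
    ∑ ρ : Fin (m + 1) → X with lam ≤ ‖f (ρ (Fin.last m)) - f (ρ 0)‖, pathWeight π P ρ ≤
      4 * exp (-(lam - K) ^ 2 / (8 * m * K ^ 2)) := by
  classical
  have hstep : ∀ x y, 0 < π x → P x y ≠ 0 → ‖f y - f x‖ ≤ K := fun x y hx hy =>
    hf x y (mul_pos hx ((hP0 x y).lt_of_ne' hy))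
  have hmean : ∀ x, 0 < π x → ‖f x - transitionMean P f x‖ ≤ K := fun x hx =>
    norm_sub_transitionMean_le hP0 hP1 (hstep x · hx)
  have hinc : ∀ x y, 0 < π x → P x y ≠ 0 → ‖f y - transitionMean P f x‖ ≤ 2 * K :=
    fun x y hx hy => calc
      ‖f y - transitionMean P f x‖ = ‖(f y - f x) + (f x - transitionMean P f x)‖ := by
        rw [sub_add_sub_cancel]
      _ ≤ K + K := (norm_add_le _ _).trans (add_le_add (hstep x y hx hy) (hmean x hx))
      _ = 2 * K := by ring
  have hsplit : ∀ ρ, pathWeight π P ρ ≠ 0 → lam ≤ ‖f (ρ (Fin.last m)) - f (ρ 0)‖ →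
      lam - K ≤ ‖pathMartingale P f ρ‖ ∨ lam - K ≤ ‖pathMartingale P f (ρ ∘ Fin.rev)‖ := by
    intro ρ hw hlam
    have h2 := two_mul_norm_sub_le fun i => hmean _ (pos_of_pathWeight_ne_zero hπ0 hP0 hstat hw i)
    by_contra! h
    linarith [h.1, h.2]
  calc ∑ ρ : Fin (m + 1) → X with lam ≤ ‖f (ρ (Fin.last m)) - f (ρ 0)‖, pathWeight π P ρ
      ≤ ∑ ρ : Fin (m + 1) → X with lam - K ≤ ‖pathMartingale P f ρ‖, pathWeight π P ρ +
          ∑ ρ : Fin (m + 1) → X with lam - K ≤ ‖pathMartingale P f (ρ ∘ Fin.rev)‖,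
            pathWeight π P ρ :=
        sum_filter_le_sum_filter_add_sum_filter (pathWeight_nonneg hπ0 hP0) hsplit
    _ ≤ 2 * (2 * exp (-(lam - K) ^ 2 / (2 * m * (2 * K) ^ 2))) := by
        rw [sum_pathWeight_filter_comp_rev hrev (lam - K ≤ ‖pathMartingale P f ·‖), ← two_mul]
        gcongr
        exact pathMartingale_tail_le hπ0 hπ1 hP0 hP1 hstat hinc (sub_nonneg.2 hKlam) m
    _ = 4 * exp (-(lam - K) ^ 2 / (8 * m * K ^ 2)) := by ring_nf

end Paths

section Cylinders

variable {X Ω : Type*} [MeasurableSpace Ω] (μ : Measure Ω) (Z : ℕ → Ω → X)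

theorem measure_le_ofReal_sum_of_measure_cylinder [Fintype X] {m : ℕ}
    {w : (Fin (m + 1) → X) → ℝ} (hw : ∀ ρ, 0 ≤ w ρ)
    (hZ : ∀ ρ : Fin (m + 1) → X,
      μ {ω | ∀ i : Fin (m + 1), Z i ω = ρ i} = ENNReal.ofReal (w ρ))
    (p : (Fin (m + 1) → X) → Prop) [DecidablePred p] :
    μ {ω | p fun i => Z i ω} ≤ ENNReal.ofReal (∑ ρ with p ρ, w ρ) := by
  calc μ {ω | p fun i => Z i ω}
      ≤ μ (⋃ ρ ∈ univ.filter p, {ω | ∀ i : Fin (m + 1), Z i ω = ρ i}) :=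
        measure_mono fun ω hω =>
          Set.mem_iUnion₂.2 ⟨_, mem_filter.2 ⟨mem_univ _, hω⟩, fun _ => rfl⟩
    _ ≤ ∑ ρ with p ρ, μ {ω | ∀ i : Fin (m + 1), Z i ω = ρ i} := measure_biUnion_finset_le _ _
    _ = ENNReal.ofReal (∑ ρ with p ρ, w ρ) := by
        rw [ENNReal.ofReal_sum_of_nonneg fun ρ _ => hw ρ]
        exact sum_congr rfl fun ρ _ => hZ ρ

theorem rel_of_ae_rel_of_pos {π : X → ℝ} {P : X → X → ℝ} (R : X → X → Prop)
    (hR : ∀ᵐ ω ∂μ, R (Z 0 ω) (Z 1 ω))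
    (hZ : ∀ ρ : Fin (1 + 1) → X,
      μ {ω | ∀ i : Fin (1 + 1), Z i ω = ρ i} = ENNReal.ofReal (pathWeight π P ρ))
    {x y : X} (hxy : 0 < π x * P x y) : R x y := by
  by_contra hxy'
  have hnull : μ {ω | ∀ i : Fin (1 + 1), Z i ω = ![x, y] i} = 0 :=
    measure_mono_null (fun ω hω => by
      show ¬R (Z 0 ω) (Z 1 ω)
      rwa [show Z 0 ω = x from hω 0, show Z 1 ω = y from hω 1]) (ae_iff.1 hR)
  rw [hZ, ENNReal.ofReal_eq_zero] at hnull
  simp [pathWeight] at hnull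
  linarith

end Cylinders

theorem tail_bound_of_stationary_reversible_chain_general
    {X : Type*} [Fintype X] [MetricSpace X]
    {H : Type*} [NormedAddCommGroup H] [InnerProductSpace ℝ H]
    {Ω : Type*} [m0 : MeasurableSpace Ω] (μ : Measure Ω) [IsProbabilityMeasure μ]
    (Z : ℕ → Ω → X)
    (π : X → ℝ) (P : X → X → ℝ)
    (hπ0 : ∀ x, 0 ≤ π x) (hπ1 : ∑ x, π x = 1)
    (hP0 : ∀ x y, 0 ≤ P x y) (hP1 : ∀ x, ∑ y, P x y = 1)
    (hstat : ∀ y, ∑ x, π x * P x y = π y)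
    (hrev : ∀ x y, π x * P x y = π y * P y x)
    (hchain : ∀ (m : ℕ) (x : Fin (m + 1) → X),
      μ {ω | ∀ i : Fin (m + 1), Z (i : ℕ) ω = x i} =
        ENNReal.ofReal (π (x 0) * ∏ i : Fin m, P (x i.castSucc) (x i.succ)))
    (hstep : ∀ᵐ ω ∂μ, dist (Z 0 ω) (Z 1 ω) ≤ 1)
    (f : X → H) (K : NNReal) (hK : LipschitzWith K f)
    (n : ℕ) (lam : ℝ) (hlam : 0 < lam) :
    μ {ω | lam ≤ ‖f (Z (2 * n) ω) - f (Z 0 ω)‖} ≤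
      ENNReal.ofReal (4 * Real.exp (-lam ^ 2 / (32 * n * (K : ℝ) ^ 2))) := by
  classical
  -- this case contains `n = 0` and `K = 0`, where the quotient is `0` (`x / 0 = 0`)
  by_cases hsmall : lam ^ 2 / (32 * n * (K : ℝ) ^ 2) ≤ 1
  · refine prob_le_one.trans (ENNReal.one_le_ofReal.2 ?_)
    rw [neg_div]
    exact Real.one_le_four_mul_exp_neg hsmall
  obtain ⟨hKlam, hexponent⟩ := le_and_sq_div_le_sub_sq_div hlam (not_le.1 hsmall)
  have hf : ∀ x y, 0 < π x * P x y → ‖f y - f x‖ ≤ K := fun x y hxy => by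
    have hxy' := rel_of_ae_rel_of_pos μ Z (dist · · ≤ 1) hstep (hchain 1) hxy
    rw [← dist_eq_norm, dist_comm]
    exact (hK.dist_le_mul x y).trans (mul_le_of_le_one_right K.2 hxy')
  calc μ {ω | lam ≤ ‖f (Z (2 * n) ω) - f (Z 0 ω)‖}
      ≤ ENNReal.ofReal (∑ ρ : Fin (2 * n + 1) → X with
          lam ≤ ‖f (ρ (Fin.last (2 * n))) - f (ρ 0)‖, pathWeight π P ρ) :=
        measure_le_ofReal_sum_of_measure_cylinder μ Z (pathWeight_nonneg hπ0 hP0) (hchain _) _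
    _ ≤ ENNReal.ofReal (4 * Real.exp (-(lam - K) ^ 2 / (8 * ↑(2 * n) * (K : ℝ) ^ 2))) :=
        ENNReal.ofReal_le_ofReal (displacement_tail_le hπ0 hπ1 hP0 hP1 hstat hrev hf hKlam _)
    _ ≤ ENNReal.ofReal (4 * Real.exp (-lam ^ 2 / (32 * n * (K : ℝ) ^ 2))) := by
        gcongr ENNReal.ofReal (4 * Real.exp ?_)
        rw [neg_div, neg_div, neg_le_neg_iff]
        exact hexponent.trans_eq (by push_cast; ring)

/-- **Subgaussian tail for the displacement of stationary reversible chains**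
(Corollary 2.2 / `cor:tail`).

Let `(X,d)` be a finite metric space, `H` a real Hilbert space, and `Z` a stationary reversible
Markov chain on `X` (initial distribution `π`, transition kernel `P`, detailed balance), with
`d(Z₀,Z₁) ≤ 1` almost surely.  Then for every `f : X → H` with Lipschitz constant `K`, every
`n ≥ 1` and every `λ > 0`,
`Pr(‖f(Z_{2n}) - f(Z_0)‖ ≥ λ) ≤ 4 exp(-λ² / (32 n K²))`. -/
theorem tail_bound_of_stationary_reversible_chain
    {X : Type*} [Fintype X] [MetricSpace X]
    {H : Type*} [NormedAddCommGroup H] [InnerProductSpace ℝ H] [CompleteSpace H]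
    {Ω : Type*} [m0 : MeasurableSpace Ω] (μ : Measure Ω) [IsProbabilityMeasure μ]
    (Z : ℕ → Ω → X) (hZmeas : ∀ t (s : Set X), MeasurableSet (Z t ⁻¹' s))
    (π : X → ℝ) (P : X → X → ℝ)
    (hπ0 : ∀ x, 0 ≤ π x) (hπ1 : ∑ x, π x = 1)
    (hP0 : ∀ x y, 0 ≤ P x y) (hP1 : ∀ x, ∑ y, P x y = 1)
    (hstat : ∀ y, ∑ x, π x * P x y = π y)
    (hrev : ∀ x y, π x * P x y = π y * P y x)
    (hchain : ∀ (m : ℕ) (x : Fin (m + 1) → X),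
      μ {ω | ∀ i : Fin (m + 1), Z (i : ℕ) ω = x i} =
        ENNReal.ofReal (π (x 0) * ∏ i : Fin m, P (x i.castSucc) (x i.succ)))
    (hstep : ∀ᵐ ω ∂μ, dist (Z 0 ω) (Z 1 ω) ≤ 1)
    (f : X → H) (K : NNReal) (hK : LipschitzWith K f)
    (n : ℕ) (hn : 1 ≤ n) (lam : ℝ) (hlam : 0 < lam) :
    μ {ω | lam ≤ ‖f (Z (2 * n) ω) - f (Z 0 ω)‖} ≤
      ENNReal.ofReal (4 * Real.exp (-lam ^ 2 / (32 * n * (K : ℝ) ^ 2))) :=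
  tail_bound_of_stationary_reversible_chain_general (m0 := m0) μ Z π P hπ0 hπ1 hP0 hP1 hstat hrev
    hchain hstep f K hK n lam hlam
end

section
/- Let (X,d) be a finite metric space, τ > 0, δ ∈ (0,1], and ε : X → ℝ_{>0}. Let 𝒫 be a random partition of X such that: (1) almost surely, every block S ∈ 𝒫 satisfies diam(S) < τ; and (2) for every x ∈ X, Pr[ B(x, ε(x)τ) ⊆ 𝒫(x) ] ≥ δ. Then there exists a 1-Lipschitz map φ_τ : X → H into a real Hilbert space H such that for all x,y ∈ X, d(x,y) ≥ τ implies ‖φ_τ(x) − φ_τ(y)‖_H ≥ (√δ / 2) · ε(x) τ. -/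
open scoped Classical

noncomputable section

/-- `P : X → Set X` is a partition map of `X`: `P x` is the block containing `x`, so each
point lies in its own block, and any two blocks are equal or disjoint. -/
def IsPartitionMap {X : Type*} (P : X → Set X) : Prop :=
  (∀ x, x ∈ P x) ∧ ∀ x y, y ∈ P x → P y = P x

set_option maxHeartbeats 1000000

/-- **From padded random partitions to embeddings** (Lemma 2.7 / `lem:embed1`).

Let `(X,d)` be a finite metric space, `τ > 0`, `δ ∈ (0,1]` and `ε : X → ℝ_{>0}`.  Suppose `𝒫`
is a random partition of `X` (modelled as a finitely supported probability distribution
`w : Fin m → ℝ` on partition maps `P i : X → Set X`) such that: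
(1) almost surely every block has diameter `< τ`; and
(2) for every `x ∈ X`, `Pr[B(x, ε(x)τ) ⊆ 𝒫(x)] ≥ δ`.
Then there is a `1`-Lipschitz map `φ_τ : X → ℓ²` (a real Hilbert space) such that
`d(x,y) ≥ τ` implies `‖φ_τ(x) - φ_τ(y)‖ ≥ (√δ/2) ε(x) τ`. -/
theorem embedding_of_padded_random_partition
    {X : Type*} [Fintype X] [MetricSpace X]
    (τ : ℝ) (hτ : 0 < τ) (δ : ℝ) (hδ0 : 0 < δ) (hδ1 : δ ≤ 1)
    (ε : X → ℝ) (hε : ∀ x, 0 < ε x)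
    (m : ℕ) (w : Fin m → ℝ) (P : Fin m → X → Set X)
    (hw0 : ∀ i, 0 ≤ w i) (hw1 : ∑ i, w i = 1)
    (hpart : ∀ i, w i ≠ 0 → IsPartitionMap (P i))
    (hdiam : ∀ i, w i ≠ 0 → ∀ x, Metric.diam (P i x) < τ)
    (hpad : ∀ x, δ ≤ ∑ i, (if Metric.closedBall x (ε x * τ) ⊆ P i x then w i else 0)) :
    ∃ φ : X → lp (fun _ : ℕ => ℝ) 2,
      LipschitzWith 1 φ ∧
      ∀ x y : X, τ ≤ dist x y → Real.sqrt δ / 2 * (ε x * τ) ≤ ‖φ x - φ y‖ := by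
  classical
  -- coordinates
  set c : Fin m × X → X → ℝ := fun j z =>
    Real.sqrt (w j.1 / (2 * ((P j.1 j.2).toFinset.card : ℝ))) *
      Metric.infDist z (P j.1 j.2)ᶜ with hc
  set idx : Fin m × X → ℕ := fun j => ((Fintype.equivFin (Fin m × X)) j : ℕ) with hidxdef
  have hidx : Function.Injective idx := fun a b h =>
    (Fintype.equivFin (Fin m × X)).injective (Fin.val_injective h)
  set v : Fin m × X → lp (fun _ : ℕ => ℝ) 2 := fun j => lp.single 2 (idx j) (1 : ℝ) with hvdef
  have hv : Orthonormal ℝ v := by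
    have h1 : Orthonormal ℝ (fun n : ℕ => lp.single 2 n (1 : ℝ) : ℕ → lp (fun _ : ℕ => ℝ) 2) := by
      rw [orthonormal_iff_ite]
      intro i j
      rw [lp.inner_single_left]
      simp [lp.single_apply, Pi.single_apply, eq_comm]
    exact h1.comp idx hidx
  set φ : X → lp (fun _ : ℕ => ℝ) 2 := fun x => ∑ j : Fin m × X, c j x • v j with hφ
  -- norm formula
  have hnorm : ∀ x y : X, ‖φ x - φ y‖ ^ 2 = ∑ j : Fin m × X, (c j x - c j y) ^ 2 := by
    intro x y
    have hsub : φ x - φ y = ∑ j : Fin m × X, (c j x - c j y) • v j := by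
      rw [hφ]
      simp [← Finset.sum_sub_distrib, sub_smul]
    rw [hsub, ← real_inner_self_eq_norm_sq, hv.inner_sum]
    simp [sq]
  -- basic facts
  have hinf_lip : ∀ (s : Set X) (x y : X),
      (Metric.infDist x s - Metric.infDist y s) ^ 2 ≤ dist x y ^ 2 := by
    intro s x y
    have h1 := Metric.infDist_le_infDist_add_dist (x := x) (y := y) (s := s)
    have h2 := Metric.infDist_le_infDist_add_dist (x := y) (y := x) (s := s)
    rw [dist_comm y x] at h2
    have : |Metric.infDist x s - Metric.infDist y s| ≤ dist x y := abs_le.2 (by constructor <;> linarith)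
    calc (Metric.infDist x s - Metric.infDist y s) ^ 2
        = |Metric.infDist x s - Metric.infDist y s| ^ 2 := (sq_abs _).symm
      _ ≤ dist x y ^ 2 := by
          apply pow_le_pow_left₀ (abs_nonneg _) this
  -- per-i block sums
  have key : ∀ (i : Fin m), w i ≠ 0 → ∀ x y : X,
      (∀ x₀ ∈ (P i x).toFinset, (c (i, x₀) x - c (i, x₀) y) ^ 2
        = w i / 2 * ((P i x).toFinset.card : ℝ)⁻¹ *
          (Metric.infDist x (P i x)ᶜ - Metric.infDist y (P i x)ᶜ) ^ 2) := by
    intro i hwi x y x₀ hx₀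
    have hx₀' : x₀ ∈ P i x := by simpa using hx₀
    have hblock : P i x₀ = P i x := (hpart i hwi).2 x x₀ hx₀'
    have hcard : (0:ℝ) < ((P i x).toFinset.card : ℝ) := by
      have : x ∈ (P i x).toFinset := by simp [(hpart i hwi).1 x]
      exact_mod_cast Finset.card_pos.2 ⟨x, this⟩
    have ha : (0:ℝ) ≤ w i / (2 * ((P i x).toFinset.card : ℝ)) :=
      div_nonneg (hw0 i) (by positivity)
    rw [hc]
    simp only [hblock]
    rw [← mul_sub, mul_pow, Real.sq_sqrt ha, ← div_div, div_eq_mul_inv (w i / 2)]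
  -- zero off the two blocks
  have hzero : ∀ (i : Fin m), w i ≠ 0 → ∀ x y : X, ∀ x₀ : X,
      x₀ ∉ P i x → x₀ ∉ P i y → (c (i, x₀) x - c (i, x₀) y) ^ 2 = 0 := by
    intro i hwi x y x₀ hx hy
    have hxmem : x ∈ (P i x₀)ᶜ := by
      intro hmem
      exact hx (((hpart i hwi).2 x₀ x hmem) ▸ (hpart i hwi).1 x₀)
    have hymem : y ∈ (P i x₀)ᶜ := by
      intro hmem
      exact hy (((hpart i hwi).2 x₀ y hmem) ▸ (hpart i hwi).1 x₀)
    rw [hc]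
    simp [Metric.infDist_zero_of_mem hxmem, Metric.infDist_zero_of_mem hymem]
  -- per-i upper bound
  have upper : ∀ (i : Fin m), ∀ x y : X,
      ∑ x₀ : X, (c (i, x₀) x - c (i, x₀) y) ^ 2 ≤ w i * dist x y ^ 2 := by
    intro i x y
    by_cases hwi : w i = 0
    · have : ∀ x₀ : X, (c (i, x₀) x - c (i, x₀) y) ^ 2 = 0 := by
        intro x₀; rw [hc]; simp [hwi]
      simp [this, hwi]
    · set A := (P i x).toFinset with hA
      set B := (P i y).toFinset with hB
      have hsupport : ∀ x₀ ∈ (Finset.univ : Finset X), x₀ ∉ A ∪ B →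
          (c (i, x₀) x - c (i, x₀) y) ^ 2 = 0 := by
        intro x₀ _ hx₀
        simp only [Finset.mem_union, hA, hB, Set.mem_toFinset] at hx₀
        push_neg at hx₀
        exact hzero i hwi x y x₀ hx₀.1 hx₀.2
      have sumA : ∀ (x' y' : X), ∑ x₀ ∈ (P i x').toFinset, (c (i, x₀) x' - c (i, x₀) y') ^ 2
          ≤ w i / 2 * dist x' y' ^ 2 := by
        intro x' y'
        rw [Finset.sum_congr rfl (key i hwi x' y')]
        rw [Finset.sum_const, nsmul_eq_mul]
        have hcard : (0:ℝ) < ((P i x').toFinset.card : ℝ) := by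
          have : x' ∈ (P i x').toFinset := by simp [(hpart i hwi).1 x']
          exact_mod_cast Finset.card_pos.2 ⟨x', this⟩
        have hd := hinf_lip (P i x')ᶜ x' y'
        calc ((P i x').toFinset.card : ℝ) * (w i / 2 * ((P i x').toFinset.card : ℝ)⁻¹ *
              (Metric.infDist x' (P i x')ᶜ - Metric.infDist y' (P i x')ᶜ) ^ 2)
            = w i / 2 * (Metric.infDist x' (P i x')ᶜ - Metric.infDist y' (P i x')ᶜ) ^ 2 := by
              rw [show (((P i x').toFinset.card : ℝ)) * (w i / 2 * ((P i x').toFinset.card : ℝ)⁻¹ *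
                    (Metric.infDist x' (P i x')ᶜ - Metric.infDist y' (P i x')ᶜ) ^ 2)
                  = (((P i x').toFinset.card : ℝ) * ((P i x').toFinset.card : ℝ)⁻¹) *
                    (w i / 2 * (Metric.infDist x' (P i x')ᶜ - Metric.infDist y' (P i x')ᶜ) ^ 2)
                  from by ring, mul_inv_cancel₀ hcard.ne', one_mul]
          _ ≤ w i / 2 * dist x' y' ^ 2 := by
              apply mul_le_mul_of_nonneg_left hd
              have := hw0 i; positivity
      have hBsum : ∑ x₀ ∈ B, (c (i, x₀) x - c (i, x₀) y) ^ 2 ≤ w i / 2 * dist x y ^ 2 := by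
        have : ∑ x₀ ∈ B, (c (i, x₀) x - c (i, x₀) y) ^ 2
            = ∑ x₀ ∈ (P i y).toFinset, (c (i, x₀) y - c (i, x₀) x) ^ 2 := by
          rw [hB]; apply Finset.sum_congr rfl; intro z _; ring
        rw [this, dist_comm]
        exact sumA y x
      have hAsum : ∑ x₀ ∈ A, (c (i, x₀) x - c (i, x₀) y) ^ 2 ≤ w i / 2 * dist x y ^ 2 :=
        sumA x y
      calc ∑ x₀ : X, (c (i, x₀) x - c (i, x₀) y) ^ 2
          = ∑ x₀ ∈ A ∪ B, (c (i, x₀) x - c (i, x₀) y) ^ 2 :=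
            (Finset.sum_subset (Finset.subset_univ _) hsupport).symm
        _ ≤ ∑ x₀ ∈ A, (c (i, x₀) x - c (i, x₀) y) ^ 2
            + ∑ x₀ ∈ B, (c (i, x₀) x - c (i, x₀) y) ^ 2 := by
            rw [← Finset.sum_union_inter]
            have : 0 ≤ ∑ x₀ ∈ A ∩ B, (c (i, x₀) x - c (i, x₀) y) ^ 2 :=
              Finset.sum_nonneg fun _ _ => sq_nonneg _
            linarith
        _ ≤ w i / 2 * dist x y ^ 2 + w i / 2 * dist x y ^ 2 := add_le_add hAsum hBsum
        _ = w i * dist x y ^ 2 := by ring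
  -- per-i lower bound in padded case
  have lower : ∀ (i : Fin m), w i ≠ 0 → ∀ x y : X, τ ≤ dist x y →
      Metric.closedBall x (ε x * τ) ⊆ P i x →
      w i / 2 * (ε x * τ) ^ 2 ≤ ∑ x₀ : X, (c (i, x₀) x - c (i, x₀) y) ^ 2 := by
    intro i hwi x y hd hball
    have hynot : y ∉ P i x := by
      intro hy
      have hb : Bornology.IsBounded (P i x) := (Set.toFinite _).isBounded
      have := Metric.dist_le_diam_of_mem hb ((hpart i hwi).1 x) hy
      have := hdiam i hwi x
      linarith
    have hDy : Metric.infDist y (P i x)ᶜ = 0 := Metric.infDist_zero_of_mem hynot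
    have hDx : ε x * τ ≤ Metric.infDist x (P i x)ᶜ := by
      rw [Metric.infDist_eq_iInf]
      haveI : Nonempty ((P i x)ᶜ : Set X) := ⟨⟨y, hynot⟩⟩
      apply le_ciInf
      intro z
      by_contra h
      push_neg at h
      exact z.2 (hball (Metric.mem_closedBall.2 (by rw [dist_comm]; linarith)))
    have hAsum : ∑ x₀ ∈ (P i x).toFinset, (c (i, x₀) x - c (i, x₀) y) ^ 2
        = w i / 2 * (Metric.infDist x (P i x)ᶜ - Metric.infDist y (P i x)ᶜ) ^ 2 := by
      rw [Finset.sum_congr rfl (key i hwi x y), Finset.sum_const, nsmul_eq_mul]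
      have hcard : (0:ℝ) < ((P i x).toFinset.card : ℝ) := by
        have : x ∈ (P i x).toFinset := by simp [(hpart i hwi).1 x]
        exact_mod_cast Finset.card_pos.2 ⟨x, this⟩
      rw [show (((P i x).toFinset.card : ℝ)) * (w i / 2 * ((P i x).toFinset.card : ℝ)⁻¹ *
            (Metric.infDist x (P i x)ᶜ - Metric.infDist y (P i x)ᶜ) ^ 2)
          = (((P i x).toFinset.card : ℝ) * ((P i x).toFinset.card : ℝ)⁻¹) *
            (w i / 2 * (Metric.infDist x (P i x)ᶜ - Metric.infDist y (P i x)ᶜ) ^ 2)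
          from by ring, mul_inv_cancel₀ hcard.ne', one_mul]
    calc w i / 2 * (ε x * τ) ^ 2
        ≤ w i / 2 * (Metric.infDist x (P i x)ᶜ - Metric.infDist y (P i x)ᶜ) ^ 2 := by
          apply mul_le_mul_of_nonneg_left _ (by have := hw0 i; positivity)
          rw [hDy, sub_zero]
          apply pow_le_pow_left₀ (mul_pos (hε x) hτ).le hDx
      _ = ∑ x₀ ∈ (P i x).toFinset, (c (i, x₀) x - c (i, x₀) y) ^ 2 := hAsum.symm
      _ ≤ ∑ x₀ : X, (c (i, x₀) x - c (i, x₀) y) ^ 2 :=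
          Finset.sum_le_sum_of_subset_of_nonneg (Finset.subset_univ _)
            (fun _ _ _ => sq_nonneg _)
  refine ⟨φ, ?_, ?_⟩
  · -- Lipschitz
    apply LipschitzWith.of_dist_le_mul
    intro x y
    rw [NNReal.coe_one, one_mul, dist_eq_norm]
    have h2 : ‖φ x - φ y‖ ^ 2 ≤ dist x y ^ 2 := by
      rw [hnorm x y, Fintype.sum_prod_type]
      calc ∑ i : Fin m, ∑ x₀ : X, (c (i, x₀) x - c (i, x₀) y) ^ 2
          ≤ ∑ i : Fin m, w i * dist x y ^ 2 := Finset.sum_le_sum fun i _ => upper i x y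
        _ = dist x y ^ 2 := by rw [← Finset.sum_mul, hw1, one_mul]
    calc ‖φ x - φ y‖ = Real.sqrt (‖φ x - φ y‖ ^ 2) := by
          rw [Real.sqrt_sq (norm_nonneg _)]
      _ ≤ Real.sqrt (dist x y ^ 2) := Real.sqrt_le_sqrt h2
      _ = dist x y := Real.sqrt_sq dist_nonneg
  · -- separation
    intro x y hd
    have hεt : (0:ℝ) < ε x * τ := mul_pos (hε x) hτ
    have h2 : δ / 2 * (ε x * τ) ^ 2 ≤ ‖φ x - φ y‖ ^ 2 := by
      rw [hnorm x y, Fintype.sum_prod_type]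
      have step : ∀ i : Fin m,
          (if Metric.closedBall x (ε x * τ) ⊆ P i x then w i else 0) / 2 * (ε x * τ) ^ 2
            ≤ ∑ x₀ : X, (c (i, x₀) x - c (i, x₀) y) ^ 2 := by
        intro i
        by_cases hp : Metric.closedBall x (ε x * τ) ⊆ P i x
        · by_cases hwi : w i = 0
          · simp only [hp, if_true, hwi, zero_div, zero_mul]
            exact Finset.sum_nonneg fun _ _ => sq_nonneg _
          · simpa [hp] using lower i hwi x y hd hp
        · simp only [hp, if_false, zero_div, zero_mul]
          exact Finset.sum_nonneg fun _ _ => sq_nonneg _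
      calc δ / 2 * (ε x * τ) ^ 2
          ≤ (∑ i, (if Metric.closedBall x (ε x * τ) ⊆ P i x then w i else 0)) / 2
              * (ε x * τ) ^ 2 := by
            apply mul_le_mul_of_nonneg_right _ (sq_nonneg _)
            have := hpad x
            linarith
        _ = ∑ i, ((if Metric.closedBall x (ε x * τ) ⊆ P i x then w i else 0) / 2
              * (ε x * τ) ^ 2) := by
            rw [Finset.sum_div, Finset.sum_mul]
        _ ≤ ∑ i : Fin m, ∑ x₀ : X, (c (i, x₀) x - c (i, x₀) y) ^ 2 :=
            Finset.sum_le_sum fun i _ => step i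
    have hsq : (Real.sqrt δ / 2 * (ε x * τ)) ^ 2 ≤ ‖φ x - φ y‖ ^ 2 := by
      have he : (Real.sqrt δ / 2 * (ε x * τ)) ^ 2 = δ / 4 * (ε x * τ) ^ 2 := by
        rw [mul_pow, div_pow, Real.sq_sqrt hδ0.le]
        ring
      rw [he]
      nlinarith [sq_nonneg (ε x * τ)]
    have hnn : (0:ℝ) ≤ Real.sqrt δ / 2 * (ε x * τ) :=
      mul_nonneg (div_nonneg (Real.sqrt_nonneg δ) (by norm_num)) hεt.le
    calc Real.sqrt δ / 2 * (ε x * τ)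
        = Real.sqrt ((Real.sqrt δ / 2 * (ε x * τ)) ^ 2) := (Real.sqrt_sq hnn).symm
      _ ≤ Real.sqrt (‖φ x - φ y‖ ^ 2) := Real.sqrt_le_sqrt hsq
      _ = ‖φ x - φ y‖ := Real.sqrt_sq (norm_nonneg _)

end
end

section
/- For every finite metric space (X,d) and every τ > 0, there exists a random partition 𝒫 of X such that: (1) almost surely, every block S ∈ 𝒫 satisfies diam(S) < τ; and (2) for every x ∈ X, Pr[ B(x, ε(x)τ) ⊆ 𝒫(x) ] ≥ 1/2, where ε(x) = ( 32 · log( e·|B(x, 5τ/8)| / |B(x, τ/8)| ) )^{−1}. -/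
/-!
The Calinescu–Karloff–Rabani construction: draw a uniformly random ranking `π` of `X` and a radius `R`
uniformly from a fine grid of step `δ` in `[τ/4, τ/2)`, and put every point in the block of the
`π`-first point of its ball of radius `R`; blocks then have diameter at most `2R < τ`.
If the `π`-first point of `B(x, R + t)` lies in `B(x, R - t)`, it is the `π`-first point of the
`R`-ball of every point of `B(x, t)`, so `B(x, t)` is not cut. As the `π`-first point of a set is
uniformly distributed on it, for fixed `R` the ball is cut with probability at most
`1 - |B(x, R - t)| / |B(x, R + t)| ≤ log |B(x, R + t)| - log |B(x, R - t)|`. Summed over the grid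
these differences telescope to at most `2 ⌈t/δ⌉ log (|B(x, 5τ/8)| / |B(x, τ/8)|)`, which is at most
half the number of grid points when `t = ε(x) τ`.
-/

open scoped Classical

noncomputable section

open Finset Function Metric

theorem Finset.card_filter_mem_mul_card_of_card_fiber_eq {Ω α : Type*} [Fintype Ω] {f : Ω → α}
    {S E : Finset α} (hf : ∀ ω, f ω ∈ S) (hES : E ⊆ S)
    (hfib : ∀ y ∈ S, ∀ y' ∈ S, #{ω | f ω = y} = #{ω | f ω = y'}) :
    #{ω | f ω ∈ E} * #S = Fintype.card Ω * #E := by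
  rcases S.eq_empty_or_nonempty with rfl | ⟨y₀, hy₀⟩
  · simp [subset_empty.1 hES]
  have hcount : ∀ T ⊆ S, #{ω | f ω ∈ T} = #T * #{ω | f ω = y₀} := fun T hT => by
    rw [card_eq_sum_card_fiberwise (s := {ω | f ω ∈ T}) (t := T) fun ω hω => (mem_filter.1 hω).2,
      ← smul_eq_mul, ← sum_const]
    refine sum_congr rfl fun y hy => ?_
    rw [filter_filter, ← hfib y (hT hy) y₀ hy₀]
    congr 1
    exact filter_congr fun ω _ => ⟨And.right, fun h => ⟨h ▸ hy, h⟩⟩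
  have huniv : Fintype.card Ω = #S * #{ω | f ω = y₀} := by
    rw [← hcount S subset_rfl, filter_true_of_mem fun ω _ => hf ω, card_univ]
  rw [hcount E hES, huniv]
  ring

namespace Function

variable {α β : Type*} [LinearOrder β] [WellFoundedLT β] {f : α → β} {s : Set α}

theorem argminOn_eq_of_injective (hf : Injective f) (hs : s.Nonempty) {a : α} (ha : a ∈ s)
    (hmin : ∀ b ∈ s, f a ≤ f b) : argminOn f s hs = a :=
  hf <| le_antisymm (argminOn_le f s ha) (hmin _ (argminOn_mem f s hs))

theorem argminOn_eq_argminOn_of_subset (hf : Injective f) {t : Set α} (hs : s.Nonempty)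
    (ht : t.Nonempty) (hst : s ⊆ t) (hmem : argminOn f t ht ∈ s) :
    argminOn f s hs = argminOn f t ht :=
  argminOn_eq_of_injective hf hs hmem fun _ hb => argminOn_le f t (hst hb)

theorem argminOn_comp_swap (hf : Injective f) (hs : s.Nonempty) {y y' : α} (hy : y ∈ s)
    (hy' : y' ∈ s) : argminOn (f ∘ Equiv.swap y y') s hs = Equiv.swap y y' (argminOn f s hs) := by
  have hswap : ∀ a ∈ s, Equiv.swap y y' a ∈ s := fun a ha => by
    rw [Equiv.swap_apply_def]; split_ifs <;> assumption
  refine argminOn_eq_of_injective (hf.comp (Equiv.injective _)) hs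
    (hswap _ (argminOn_mem f s hs)) fun b hb => ?_
  simpa using argminOn_le f s (hswap b hb)

end Function

section RandomRanking

variable {α : Type*} [Fintype α] {n : ℕ} {s : Set α}

theorem card_filter_argminOn_eq_eq (hs : s.Nonempty) {y y' : α} (hy : y ∈ s) (hy' : y' ∈ s) :
    #{π : α ≃ Fin n | argminOn π s hs = y} = #{π : α ≃ Fin n | argminOn π s hs = y'} :=
  card_equiv ((Equiv.swap y y').equivCongr (Equiv.refl _)) fun π => by
    have hcoe : ⇑((Equiv.swap y y').equivCongr (Equiv.refl (Fin n)) π) = π ∘ Equiv.swap y y' := by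
      ext; simp
    simp only [mem_filter_univ]
    rw [hcoe, argminOn_comp_swap π.injective hs hy hy', Equiv.swap_apply_eq_iff,
      Equiv.swap_apply_right]

theorem card_filter_argminOn_mem_mul_ncard (hs : s.Nonempty) {E : Set α} [DecidablePred (· ∈ E)]
    (hE : E ⊆ s) :
    #{π : α ≃ Fin n | argminOn π s hs ∈ E} * s.ncard = Fintype.card (α ≃ Fin n) * E.ncard := by
  have := card_filter_mem_mul_card_of_card_fiber_eq (f := fun π : α ≃ Fin n => argminOn π s hs)
    (S := s.toFinset) (E := E.toFinset) (fun π => by simp) (by simpa using hE)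
    fun y hy y' hy' => card_filter_argminOn_eq_eq hs (by simpa using hy) (by simpa using hy')
  simpa [Set.ncard_eq_toFinset_card'] using this

end RandomRanking

theorem Monotone.sum_range_sub_add_le {β : Type*} [AddCommGroup β] [PartialOrder β]
    [IsOrderedAddMonoid β] {G : ℕ → β} (hG : Monotone G) (K q : ℕ) :
    ∑ k ∈ range K, (G (k + q) - G k) ≤ q • (G (K + q) - G 0) :=
  calc ∑ k ∈ range K, (G (k + q) - G k)
      = ∑ k ∈ range K, ∑ i ∈ range q, (G (k + (i + 1)) - G (k + i)) := by
        refine sum_congr rfl fun k _ => ?_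
        simpa using (sum_range_sub (fun i => G (k + i)) q).symm
    _ = ∑ i ∈ range q, (G (K + i) - G i) := by
        rw [sum_comm]
        refine sum_congr rfl fun i _ => ?_
        simpa [add_assoc, add_comm, add_left_comm] using sum_range_sub (fun k => G (k + i)) K
    _ ≤ ∑ _i ∈ range q, (G (K + q) - G 0) :=
        sum_le_sum fun i hi => sub_le_sub (hG (by simp at hi; omega)) (hG (Nat.zero_le i))
    _ = q • (G (K + q) - G 0) := by rw [sum_const, card_range]

theorem Monotone.sum_range_sub_le_of_le_mul {G : ℝ → ℝ} (hG : Monotone G) {r δ t : ℝ} {p : ℕ}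
    (hδ : 0 ≤ δ) (htp : t ≤ p * δ) (K : ℕ) :
    ∑ k ∈ range K, (G (r + k * δ + t) - G (r + k * δ - t)) ≤
      2 * p * (G (r + (K + p) * δ) - G (r - p * δ)) := by
  set H : ℕ → ℝ := fun j => G (r - p * δ + j * δ)
  have hH : Monotone H := fun i j hij => hG (by gcongr)
  calc ∑ k ∈ range K, (G (r + k * δ + t) - G (r + k * δ - t))
      ≤ ∑ k ∈ range K, (H (k + 2 * p) - H k) :=
        sum_le_sum fun k _ => sub_le_sub (hG (by push_cast; linarith)) (hG (by linarith))
    _ ≤ (2 * p) • (H (K + 2 * p) - H 0) := hH.sum_range_sub_add_le K (2 * p)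
    _ = 2 * p * (G (r + (K + p) * δ) - G (r - p * δ)) := by
        simp only [H, nsmul_eq_mul]; push_cast; ring_nf

theorem monotone_log_ncard_closedBall {X : Type*} [PseudoMetricSpace X] [Finite X] (x : X) :
    Monotone fun s => Real.log (closedBall x s).ncard := by
  intro s s' hs
  have hle : (closedBall x s).ncard ≤ (closedBall x s').ncard :=
    Set.ncard_le_ncard (closedBall_subset_closedBall hs)
  rcases Nat.eq_zero_or_pos (closedBall x s).ncard with h0 | hpos
  · simp only [h0, Nat.cast_zero, Real.log_zero]
    exact Real.log_natCast_nonneg _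
  · exact Real.log_le_log (by exact_mod_cast hpos) (by exact_mod_cast hle)

section CKR

variable {X : Type*} [PseudoMetricSpace X] {n : ℕ}

def ckrCenter (π : X ≃ Fin n) (R : ℝ) (z : X) : X :=
  if hR : 0 ≤ R then argminOn π (closedBall z R) (nonempty_closedBall.2 hR) else z

def ckrBlock (π : X ≃ Fin n) (R : ℝ) (x : X) : Set X :=
  {z | ckrCenter π R z = ckrCenter π R x}

theorem ckrCenter_of_nonneg (π : X ≃ Fin n) {R : ℝ} (hR : 0 ≤ R) (z : X) :
    ckrCenter π R z = argminOn π (closedBall z R) (nonempty_closedBall.2 hR) :=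
  dif_pos hR

theorem ckrCenter_mem_closedBall (π : X ≃ Fin n) {R : ℝ} (hR : 0 ≤ R) (z : X) :
    ckrCenter π R z ∈ closedBall z R := by
  rw [ckrCenter_of_nonneg π hR]
  exact argminOn_mem _ _ _

theorem isPartitionMap_ckrBlock (π : X ≃ Fin n) (R : ℝ) : IsPartitionMap (ckrBlock π R) :=
  ⟨fun _ => rfl, fun _ _ hy => by simp only [ckrBlock, hy.out]⟩

theorem diam_ckrBlock_le (π : X ≃ Fin n) {R : ℝ} (hR : 0 ≤ R) (x : X) :
    diam (ckrBlock π R x) ≤ 2 * R := by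
  refine diam_le_of_forall_dist_le (by linarith) fun z (hz : _ = _) z' (hz' : _ = _) => ?_
  have h := ckrCenter_mem_closedBall π hR z
  have h' := ckrCenter_mem_closedBall π hR z'
  rw [hz, mem_closedBall] at h
  rw [hz', mem_closedBall] at h'
  linarith [dist_triangle_left z z' (ckrCenter π R x)]

theorem ckrCenter_eq_of_closedBall_subset (π : X ≃ Fin n) {R R' : ℝ} (hR : 0 ≤ R) {x z : X}
    (hsub : closedBall z R ⊆ closedBall x R') (hmem : ckrCenter π R' x ∈ closedBall z R) :
    ckrCenter π R z = ckrCenter π R' x := by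
  have hR' : 0 ≤ R' := dist_nonneg.trans (mem_closedBall.1 (hsub (mem_closedBall_self hR)))
  rw [ckrCenter_of_nonneg π hR'] at hmem ⊢
  rw [ckrCenter_of_nonneg π hR]
  exact argminOn_eq_argminOn_of_subset π.injective _ _ hsub hmem

theorem closedBall_subset_ckrBlock (π : X ≃ Fin n) {R t : ℝ} (hR : 0 ≤ R) {x : X}
    (h : dist (ckrCenter π (R + t) x) x ≤ R - t) : closedBall x t ⊆ ckrBlock π R x := by
  have hcenter : ∀ z ∈ closedBall x t, ckrCenter π R z = ckrCenter π (R + t) x := by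
    intro z hz
    rw [mem_closedBall] at hz
    refine ckrCenter_eq_of_closedBall_subset π hR (closedBall_subset_closedBall' (by linarith))
      (mem_closedBall.2 ?_)
    linarith [dist_triangle (ckrCenter π (R + t) x) x z, dist_comm x z]
  intro z hz
  have ht : 0 ≤ t := dist_nonneg.trans (mem_closedBall.1 hz)
  exact (hcenter z hz).trans (hcenter x (mem_closedBall_self ht)).symm

variable [Fintype X]

theorem card_filter_not_closedBall_subset_ckrBlock_le (x : X) {R t : ℝ} (ht : 0 ≤ t)
    (htR : t ≤ R) :
    (#{π : X ≃ Fin n | ¬closedBall x t ⊆ ckrBlock π R x} : ℝ) ≤ Fintype.card (X ≃ Fin n) *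
      (Real.log (closedBall x (R + t)).ncard - Real.log (closedBall x (R - t)).ncard) := by
  set S := closedBall x (R + t)
  set B := closedBall x (R - t)
  have hRt : 0 ≤ R + t := by linarith
  have hBS : B ⊆ S := closedBall_subset_closedBall (by linarith)
  have hBS' : B.ncard ≤ S.ncard := Set.ncard_le_ncard hBS
  have hB : (0 : ℝ) < B.ncard := by
    exact_mod_cast (Set.ncard_pos (s := B)).2 (nonempty_closedBall.2 (by linarith))
  have hS : (0 : ℝ) < S.ncard := hB.trans_le (by exact_mod_cast hBS')
  have hSne : S.Nonempty := nonempty_closedBall.2 hRt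
  have hbad : #{π : X ≃ Fin n | ¬closedBall x t ⊆ ckrBlock π R x} ≤
      #{π : X ≃ Fin n | argminOn π S hSne ∈ S \ B} := by
    refine card_le_card fun π => ?_
    have hc : argminOn π S hSne = ckrCenter π (R + t) x := (ckrCenter_of_nonneg π hRt x).symm
    simp only [mem_filter_univ, hc]
    exact fun h => ⟨ckrCenter_mem_closedBall π hRt x,
      fun hB => h (closedBall_subset_ckrBlock π (by linarith) hB)⟩
  have hcount := card_filter_argminOn_mem_mul_ncard (n := n) hSne (Set.sdiff_subset (t := B))
  rw [Set.ncard_sdiff hBS] at hcount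
  calc (#{π : X ≃ Fin n | ¬closedBall x t ⊆ ckrBlock π R x} : ℝ)
      ≤ #{π : X ≃ Fin n | argminOn π S hSne ∈ S \ B} := by exact_mod_cast hbad
    _ = Fintype.card (X ≃ Fin n) * (1 - (S.ncard / B.ncard : ℝ)⁻¹) := by
      rw [inv_div]
      field_simp
      rw [← Nat.cast_sub hBS']
      exact_mod_cast hcount
    _ ≤ Fintype.card (X ≃ Fin n) * (Real.log S.ncard - Real.log B.ncard) := by
      rw [← Real.log_div hS.ne' hB.ne']
      gcongr
      exact Real.one_sub_inv_le_log_of_pos (by positivity)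

theorem sum_card_filter_not_closedBall_subset_ckrBlock_le (x : X) {r δ t : ℝ} {p : ℕ}
    (hδ : 0 ≤ δ) (ht : 0 ≤ t) (htr : t ≤ r) (htp : t ≤ p * δ) (K : ℕ) :
    ∑ k ∈ range K, (#{π : X ≃ Fin n | ¬closedBall x t ⊆ ckrBlock π (r + k * δ) x} : ℝ) ≤
      Fintype.card (X ≃ Fin n) * (2 * p * (Real.log (closedBall x (r + (K + p) * δ)).ncard -
        Real.log (closedBall x (r - p * δ)).ncard)) :=
  calc ∑ k ∈ range K, (#{π : X ≃ Fin n | ¬closedBall x t ⊆ ckrBlock π (r + k * δ) x} : ℝ)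
      ≤ ∑ k ∈ range K, Fintype.card (X ≃ Fin n) * (Real.log (closedBall x (r + k * δ + t)).ncard -
          Real.log (closedBall x (r + k * δ - t)).ncard) :=
        sum_le_sum fun k _ => card_filter_not_closedBall_subset_ckrBlock_le x ht
          (by nlinarith [k.cast_nonneg (α := ℝ)])
    _ ≤ _ := by
        rw [← mul_sum]
        gcongr
        exact (monotone_log_ncard_closedBall x).sum_range_sub_le_of_le_mul hδ htp K

end CKR

theorem natCeil_div_one_add_bounds {N Λ : ℝ} (hN : 1 ≤ N) (hΛ : 0 ≤ Λ) (hΛN : Λ ≤ N) :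
    (⌈N / (1 + Λ)⌉₊ : ℝ) ≤ 4 * N ∧ (⌈N / (1 + Λ)⌉₊ : ℝ) * Λ ≤ 2 * N := by
  have hp := Nat.ceil_lt_add_one (by positivity : 0 ≤ N / (1 + Λ))
  have hq : N / (1 + Λ) * Λ ≤ N := by
    rw [div_mul_eq_mul_div, div_le_iff₀ (by positivity)]
    nlinarith
  have hq' : N / (1 + Λ) ≤ N := div_le_self (by linarith) (by linarith)
  constructor <;> nlinarith

theorem exists_weighted_partitions_of_uniform {X Ω : Type*} [PseudoMetricSpace X] [Fintype Ω]
    [Nonempty Ω] {τ : ℝ} (ρ : X → ℝ) (Q : Ω → X → Set X) (hQ : ∀ ω, IsPartitionMap (Q ω))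
    (hdiam : ∀ ω x, diam (Q ω x) < τ)
    (hpad : ∀ x, (Fintype.card Ω : ℝ) ≤ 2 * #{ω | closedBall x (ρ x) ⊆ Q ω x}) :
    ∃ (m : ℕ) (w : Fin m → ℝ) (P : Fin m → X → Set X),
      (∀ i, 0 ≤ w i) ∧ (∑ i, w i = 1) ∧
      (∀ i, w i ≠ 0 → IsPartitionMap (P i)) ∧
      (∀ i, w i ≠ 0 → ∀ x, diam (P i x) < τ) ∧
      (∀ x, (1 : ℝ) / 2 ≤ ∑ i, if closedBall x (ρ x) ⊆ P i x then w i else 0) := by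
  set e := Fintype.equivFin Ω
  have hΩ : (0 : ℝ) < Fintype.card Ω := by exact_mod_cast Fintype.card_pos
  refine ⟨_, fun _ => (Fintype.card Ω : ℝ)⁻¹, fun i => Q (e.symm i), fun _ => by positivity, ?_,
    fun _ _ => hQ _, fun _ _ => hdiam _, fun x => ?_⟩
  · simp [hΩ.ne']
  · rw [e.symm.sum_comp (fun ω => if closedBall x (ρ x) ⊆ Q ω x then _ else 0), ← sum_filter,
      sum_const, nsmul_eq_mul, le_mul_inv_iff₀ hΩ]
    linarith [hpad x]

section CKRPartition

variable {X : Type*} [PseudoMetricSpace X] [Fintype X]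

abbrev CkrSample (X : Type*) [Fintype X] :=
  (X ≃ Fin (Fintype.card X)) × Fin (8 * (Fintype.card X + 1))

/-- `ω = (π, k)` stands for the ranking `π` and the radius `τ / 4 + k τ / (32 (|X| + 1))`;
these radii run through `[τ / 4, τ / 2)`. -/
def ckrPartition (τ : ℝ) (ω : CkrSample X) : X → Set X :=
  ckrBlock ω.1 (τ / 4 + ω.2 * (τ / (32 * (Fintype.card X + 1))))

def ballLogGrowth (τ : ℝ) (x : X) : ℝ :=
  Real.log (closedBall x (5 * τ / 8)).ncard - Real.log (closedBall x (τ / 8)).ncard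

def paddingRadius (τ : ℝ) (x : X) : ℝ :=
  (32 * Real.log (Real.exp 1 * ((closedBall x (5 * τ / 8)).ncard : ℝ) /
    ((closedBall x (τ / 8)).ncard : ℝ)))⁻¹ * τ

theorem log_ncard_sub_log_ncard_le_ballLogGrowth {τ s s' : ℝ} (x : X) (hs : τ / 8 ≤ s)
    (hs' : s' ≤ 5 * τ / 8) :
    Real.log (closedBall x s').ncard - Real.log (closedBall x s).ncard ≤ ballLogGrowth τ x :=
  sub_le_sub (monotone_log_ncard_closedBall x hs') (monotone_log_ncard_closedBall x hs)

theorem ballLogGrowth_nonneg {τ : ℝ} (hτ : 0 ≤ τ) (x : X) : 0 ≤ ballLogGrowth τ x :=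
  sub_nonneg.2 (monotone_log_ncard_closedBall x (by linarith))

theorem ballLogGrowth_le_card (τ : ℝ) (x : X) : ballLogGrowth τ x ≤ Fintype.card X := by
  have hb : ((closedBall x (5 * τ / 8)).ncard : ℝ) ≤ Fintype.card X := by
    exact_mod_cast (Set.ncard_le_card _).trans_eq Nat.card_eq_fintype_card
  rw [ballLogGrowth]
  linarith [Real.log_natCast_nonneg (closedBall x (τ / 8)).ncard,
    Real.log_le_self (Nat.cast_nonneg (α := ℝ) (closedBall x (5 * τ / 8)).ncard)]

theorem paddingRadius_eq {τ : ℝ} (hτ : 0 ≤ τ) (x : X) :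
    paddingRadius τ x = τ / (32 * (1 + ballLogGrowth τ x)) := by
  have ha : (0 : ℝ) < (closedBall x (τ / 8)).ncard := by
    exact_mod_cast (Set.ncard_pos (s := closedBall x (τ / 8))).2
      ⟨x, mem_closedBall_self (by positivity)⟩
  have hb : (0 : ℝ) < (closedBall x (5 * τ / 8)).ncard := by
    exact_mod_cast (Set.ncard_pos (s := closedBall x (5 * τ / 8))).2
      ⟨x, mem_closedBall_self (by positivity)⟩
  rw [paddingRadius, Real.log_div (by positivity) ha.ne', Real.log_mul (by positivity) hb.ne',
    Real.log_exp, ballLogGrowth]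
  ring

theorem diam_ckrPartition_lt {τ : ℝ} (hτ : 0 < τ) (ω : CkrSample X) (x : X) :
    diam (ckrPartition τ ω x) < τ := by
  refine (diam_ckrBlock_le _ (by positivity) x).trans_lt ?_
  have hk : (ω.2 : ℝ) < 8 * (Fintype.card X + 1) := by exact_mod_cast ω.2.isLt
  calc 2 * (τ / 4 + ω.2 * (τ / (32 * (Fintype.card X + 1))))
      < 2 * (τ / 4 + 8 * (Fintype.card X + 1) * (τ / (32 * (Fintype.card X + 1)))) := by
        gcongr
    _ = τ := by field_simp; ring

theorem card_filter_ckrPartition_eq_sum (τ : ℝ) (P : (X → Set X) → Prop) [DecidablePred P] :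
    #{ω : CkrSample X | P (ckrPartition τ ω)} = ∑ k ∈ range (8 * (Fintype.card X + 1)),
      #{π : X ≃ Fin (Fintype.card X) |
        P (ckrBlock π (τ / 4 + k * (τ / (32 * (Fintype.card X + 1)))))} := by
  rw [← Fin.sum_univ_eq_sum_range (fun k => #{π : X ≃ Fin (Fintype.card X) |
    P (ckrBlock π (τ / 4 + k * (τ / (32 * (Fintype.card X + 1)))))})]
  simp only [card_filter, Fintype.sum_prod_type_right]
  rfl

theorem card_filter_not_closedBall_paddingRadius_subset_le {τ : ℝ} (hτ : 0 < τ) (x : X) :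
    (#{ω : CkrSample X | ¬closedBall x (paddingRadius τ x) ⊆ ckrPartition τ ω x} : ℝ) ≤
      Fintype.card (X ≃ Fin (Fintype.card X)) * (4 * (Fintype.card X + 1)) := by
  set N : ℝ := Fintype.card X + 1
  set δ := τ / (32 * N) with hδ_def
  set Λ := ballLogGrowth τ x
  have hN : 1 ≤ N := by simp [N]
  have hNδ : 32 * N * δ = τ := by rw [hδ_def]; field_simp
  have hΛ : 0 ≤ Λ := ballLogGrowth_nonneg hτ.le x
  obtain ⟨hp4N, hpΛ⟩ :=
    natCeil_div_one_add_bounds hN hΛ ((ballLogGrowth_le_card τ x).trans (by simp [N]))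
  set p := ⌈N / (1 + Λ)⌉₊
  have htp : τ / (32 * (1 + Λ)) ≤ p * δ :=
    calc τ / (32 * (1 + Λ)) = N / (1 + Λ) * δ := by rw [← hNδ]; field_simp
      _ ≤ p * δ := by gcongr; exact Nat.le_ceil _
  have hpδ : p * δ ≤ τ / 8 := by nlinarith
  have hgrowth := log_ncard_sub_log_ncard_le_ballLogGrowth x
    (by linarith : τ / 8 ≤ τ / 4 - p * δ) (by linarith : τ / 4 + (8 * N + p) * δ ≤ 5 * τ / 8)
  have hK : ((8 * (Fintype.card X + 1) : ℕ) : ℝ) = 8 * N := by push_cast; rfl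
  rw [card_filter_ckrPartition_eq_sum τ fun P => ¬closedBall x (paddingRadius τ x) ⊆ P x]
  rw [paddingRadius_eq hτ.le]
  push_cast
  refine (sum_card_filter_not_closedBall_subset_ckrBlock_le x (by positivity) (by positivity)
    (div_le_div_of_nonneg_left hτ.le (by norm_num) (by linarith)) htp _).trans ?_
  rw [hK]
  gcongr _ * ?_
  exact (mul_le_mul_of_nonneg_left hgrowth (by positivity)).trans (by linarith)

theorem card_le_two_mul_card_closedBall_paddingRadius_subset {τ : ℝ} (hτ : 0 < τ) (x : X) :
    (Fintype.card (CkrSample X) : ℝ) ≤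
      2 * #{ω | closedBall x (paddingRadius τ x) ⊆ ckrPartition τ ω x} := by
  have hcard : (Fintype.card (CkrSample X) : ℝ) =
      Fintype.card (X ≃ Fin (Fintype.card X)) * (8 * (Fintype.card X + 1)) := by
    simp only [CkrSample, Fintype.card_prod, Fintype.card_fin]
    push_cast
    rfl
  have hsplit : (#{ω : CkrSample X | closedBall x (paddingRadius τ x) ⊆ ckrPartition τ ω x} : ℝ) +
      #{ω : CkrSample X | ¬closedBall x (paddingRadius τ x) ⊆ ckrPartition τ ω x} =
        Fintype.card (CkrSample X) := by
    exact_mod_cast card_filter_add_card_filter_not (s := univ) _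
  linarith [card_filter_not_closedBall_paddingRadius_subset_le hτ x]

end CKRPartition

/-- **Existence of padded random partitions** (Lemma 2.8 / `lem:partition`, following
Calinescu–Karloff–Rabani).

For every finite metric space `(X,d)` and every `τ > 0` there is a random partition `𝒫` of
`X` (modelled as a finitely supported probability distribution `w : Fin m → ℝ` on partition
maps `P i : X → Set X`) such that:
(1) almost surely every block has diameter `< τ`; and
(2) for every `x ∈ X`, `Pr[B(x, ε(x)τ) ⊆ 𝒫(x)] ≥ 1/2`, where
`ε(x) = (32 log(e |B(x,5τ/8)| / |B(x,τ/8)|))⁻¹` and `B(x,r)` is the closed ball. -/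
theorem padded_random_partition_exists
    {X : Type*} [Fintype X] [MetricSpace X] (τ : ℝ) (hτ : 0 < τ) :
    ∃ (m : ℕ) (w : Fin m → ℝ) (P : Fin m → X → Set X),
      (∀ i, 0 ≤ w i) ∧ (∑ i, w i = 1) ∧
      (∀ i, w i ≠ 0 → IsPartitionMap (P i)) ∧
      (∀ i, w i ≠ 0 → ∀ x, Metric.diam (P i x) < τ) ∧
      (∀ x, (1 : ℝ) / 2 ≤ ∑ i,
        (if Metric.closedBall x
              ((32 * Real.log (Real.exp 1 * ((Metric.closedBall x (5 * τ / 8)).ncard : ℝ) /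
                ((Metric.closedBall x (τ / 8)).ncard : ℝ)))⁻¹ * τ) ⊆ P i x
          then w i else 0)) := by
  have : Nonempty (X ≃ Fin (Fintype.card X)) := ⟨Fintype.equivFin X⟩
  exact exists_weighted_partitions_of_uniform (paddingRadius τ) (ckrPartition τ)
    (fun ω => isPartitionMap_ckrBlock _ _) (diam_ckrPartition_lt hτ)
    (card_le_two_mul_card_closedBall_paddingRadius_subset hτ)
end
end

section
/- Let (H, ρ_H) and (G, ρ_G) be finite connected rooted simple graphs with at least one edge each, and let 𝔾 = 𝔾(G;H) be the rooted graph obtained from them by the tree-of-H's-under-G construction, with root ρ_𝔾 = ρ_G. Then: (1) deg_𝔾(ρ_𝔾) = deg_G(ρ_G); (2) the maximum degree satisfies Δ_𝔾 ≤ max{ Δ_H, Δ_G + 1, deg_H(ρ_H) + 1 }; and (3) diam(𝔾) ≤ diam(G) + 6·diam(H). -/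
/-!
Degrees in `𝔾(G;H)` are local: a non-root vertex of `G` gains one tail edge, the root of each
copy of `H` gains one, and a tail vertex has degree at most two, which is at most `Δ_G + 1`
because its anchor `w ≠ ρ_G` has a neighbour in the connected graph `G`.
For the diameter, every vertex is within `2 diam(H) + diam(H) = 3 diam(H)` of its anchor in `G`
(down the tail, then inside the copy of `H`), so two vertices are within `diam(G) + 6 diam(H)`.
-/

open scoped Classical

noncomputable section

/-- The vertex set of the "tree of `H`'s under `G`" construction `𝔾(G;H)`:
the vertices of `G`, together with, for every non-root vertex `u` of `G`, a disjoint copy of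
the vertices of `H` and the `L` internal vertices of the tail joining `u` to the root of its
copy of `H` (so the tail, a path from `u` to the copy of `ρ_H`, has length `L + 1`). -/
abbrev TreeVert (VG VH : Type*) (ρG : VG) (L : ℕ) : Type _ :=
  VG ⊕ (({u : VG // u ≠ ρG} × VH) ⊕ ({u : VG // u ≠ ρG} × Fin L))

/-- One direction of each edge of `𝔾(G;H)`:  the edges of `G`; for each non-root `u ∈ V(G)`,
the edges of the copy `H^{(u)}` of `H`; and the edges of the tail
`u — p_{u,0} — p_{u,1} — ⋯ — p_{u,L-1} — ρ_H^{(u)}`. -/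
def treeRel {VG VH : Type*} (G : SimpleGraph VG) (H : SimpleGraph VH) (ρG : VG) (ρH : VH)
    (L : ℕ) : TreeVert VG VH ρG L → TreeVert VG VH ρG L → Prop
  | Sum.inl u, Sum.inl v => G.Adj u v
  | Sum.inl u, Sum.inr (Sum.inr (w, i)) => (w : VG) = u ∧ (i : ℕ) = 0
  | Sum.inr (Sum.inr (w, i)), Sum.inr (Sum.inr (w', j)) => w = w' ∧ (j : ℕ) = (i : ℕ) + 1
  | Sum.inr (Sum.inr (w, i)), Sum.inr (Sum.inl (w', h)) => w = w' ∧ (i : ℕ) = L - 1 ∧ h = ρH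
  | Sum.inr (Sum.inl (w, h)), Sum.inr (Sum.inl (w', h')) => w = w' ∧ H.Adj h h'
  | _, _ => False

/-- The graph `𝔾(G;H)` of the "tree of `H`'s under `G`" construction, where each tail is a
path of length `2 diam(H)` (so it has `2 diam(H) - 1` internal vertices). -/
def treeGraph {VG VH : Type*} (G : SimpleGraph VG) (H : SimpleGraph VH) (ρG : VG) (ρH : VH) :
    SimpleGraph (TreeVert VG VH ρG (2 * H.diam - 1)) :=
  SimpleGraph.fromRel (treeRel G H ρG ρH (2 * H.diam - 1))

namespace SimpleGraph

variable {V W : Type*} {G : SimpleGraph V}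

lemma Hom.edist_le {G' : SimpleGraph W} (f : G →g G') (u v : V) :
    G'.edist (f u) (f v) ≤ G.edist u v := by
  by_cases h : G.Reachable u v
  · obtain ⟨p, hp⟩ := h.exists_walk_length_eq_edist
    rw [← hp, ← p.length_map f]
    exact SimpleGraph.edist_le _
  · simp [edist_eq_top_of_not_reachable h]

lemma Connected.edist_le_diam [Finite V] (hG : G.Connected) (u v : V) :
    G.edist u v ≤ G.diam := by
  have := hG.nonempty
  rw [← (hG u v).coe_dist_eq_edist]
  exact_mod_cast dist_le_diam (connected_iff_ediam_ne_top.mp hG)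

lemma Connected.one_le_diam [Finite V] (hG : G.Connected) (he : G.edgeSet.Nonempty) :
    1 ≤ G.diam := by
  obtain ⟨⟨u, v⟩, huv⟩ := he
  have := (G.mem_edgeSet.mp huv).nontrivial
  exact Nat.one_le_iff_ne_zero.mpr (connected_iff_diam_ne_zero.mp hG)

end SimpleGraph

namespace TreeGraph

open SimpleGraph Sum

variable {VG VH : Type*} (G : SimpleGraph VG) (H : SimpleGraph VH) (ρG : VG) (ρH : VH) (L : ℕ)

def treeGraphWith : SimpleGraph (TreeVert VG VH ρG L) :=
  SimpleGraph.fromRel (treeRel G H ρG ρH L)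

variable {G H ρG ρH L}

section Adj

variable {u v : VG} {w w' : {u : VG // u ≠ ρG}} {h h' : VH} {i j : Fin L}

@[simp] lemma adj_inl_inl : (treeGraphWith G H ρG ρH L).Adj (inl u) (inl v) ↔ G.Adj u v := by
  simp only [treeGraphWith, fromRel_adj, treeRel]
  grind [Adj.ne, Adj.symm]

@[simp] lemma not_adj_inl_copy :
    ¬ (treeGraphWith G H ρG ρH L).Adj (inl u) (inr (inl (w, h))) := by
  simp [treeGraphWith, treeRel]

@[simp] lemma adj_inl_tail :
    (treeGraphWith G H ρG ρH L).Adj (inl u) (inr (inr (w, i))) ↔ w = u ∧ (i : ℕ) = 0 := by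
  simp [treeGraphWith, treeRel]

@[simp] lemma adj_copy_copy :
    (treeGraphWith G H ρG ρH L).Adj (inr (inl (w, h))) (inr (inl (w', h'))) ↔
      w = w' ∧ H.Adj h h' := by
  simp only [treeGraphWith, fromRel_adj, treeRel]
  grind [Adj.ne, Adj.symm]

@[simp] lemma adj_copy_tail :
    (treeGraphWith G H ρG ρH L).Adj (inr (inl (w, h))) (inr (inr (w', i))) ↔
      w = w' ∧ (i : ℕ) = L - 1 ∧ h = ρH := by
  simp [treeGraphWith, treeRel, eq_comm]

@[simp] lemma adj_tail_tail :
    (treeGraphWith G H ρG ρH L).Adj (inr (inr (w, i))) (inr (inr (w', j))) ↔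
      w = w' ∧ ((j : ℕ) = i + 1 ∨ (i : ℕ) = j + 1) := by
  simp only [treeGraphWith, fromRel_adj, treeRel]
  grind

end Adj

section Degree

variable [Fintype VG] [Fintype VH]

lemma neighborFinset_inl_root :
    (treeGraphWith G H ρG ρH L).neighborFinset (inl ρG) =
      (G.neighborFinset ρG).map .inl := by
  ext (u | ⟨w, h⟩ | ⟨w, i⟩)
  · simp
  · simp
  · simpa using fun h _ => w.2 h

lemma degree_inl_root : (treeGraphWith G H ρG ρH L).degree (inl ρG) = G.degree ρG := by
  rw [← card_neighborFinset_eq_degree, neighborFinset_inl_root, Finset.card_map,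
    card_neighborFinset_eq_degree]

lemma degree_inl_le (hL : 0 < L) {u : VG} (hu : u ≠ ρG) :
    (treeGraphWith G H ρG ρH L).degree (inl u) ≤ G.degree u + 1 := by
  have hsub : (treeGraphWith G H ρG ρH L).neighborFinset (inl u) ⊆
      insert (inr (inr (⟨u, hu⟩, ⟨0, hL⟩))) ((G.neighborFinset u).map .inl) := by
    rintro (v | ⟨w, h⟩ | ⟨w, i⟩) hx <;> simp_all [Subtype.ext_iff, Fin.ext_iff]
  grw [← card_neighborFinset_eq_degree, Finset.card_le_card hsub, Finset.card_insert_le,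
    Finset.card_map, card_neighborFinset_eq_degree]

lemma degree_copy_le {w : {u : VG // u ≠ ρG}} {h : VH} (hh : h ≠ ρH) :
    (treeGraphWith G H ρG ρH L).degree (inr (inl (w, h))) ≤ H.degree h := by
  have hsub : (treeGraphWith G H ρG ρH L).neighborFinset (inr (inl (w, h))) ⊆
      (H.neighborFinset h).image fun h' => inr (inl (w, h')) := by
    rintro (v | ⟨w', h'⟩ | ⟨w', i⟩) hx <;> simp_all [adj_comm, and_comm]
  grw [← card_neighborFinset_eq_degree, Finset.card_le_card hsub, Finset.card_image_le,
    card_neighborFinset_eq_degree]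

lemma degree_copy_root_le (hL : 0 < L) {w : {u : VG // u ≠ ρG}} :
    (treeGraphWith G H ρG ρH L).degree (inr (inl (w, ρH))) ≤ H.degree ρH + 1 := by
  have hsub : (treeGraphWith G H ρG ρH L).neighborFinset (inr (inl (w, ρH))) ⊆
      insert (inr (inr (w, ⟨L - 1, by omega⟩)))
        ((H.neighborFinset ρH).image fun h' => inr (inl (w, h'))) := by
    rintro (v | ⟨w', h'⟩ | ⟨w', i⟩) hx <;>
      simp_all [adj_comm, and_comm, Fin.ext_iff, eq_comm]
  grw [← card_neighborFinset_eq_degree, Finset.card_le_card hsub, Finset.card_insert_le,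
    Finset.card_image_le, card_neighborFinset_eq_degree]

lemma degree_tail_le_two {w : {u : VG // u ≠ ρG}} {i : Fin L} :
    (treeGraphWith G H ρG ρH L).degree (inr (inr (w, i))) ≤ 2 := by
  let prev : TreeVert VG VH ρG L :=
    if (i : ℕ) = 0 then inl w else inr (inr (w, ⟨i - 1, by omega⟩))
  let next : TreeVert VG VH ρG L :=
    if hi : (i : ℕ) + 1 = L then inr (inl (w, ρH)) else inr (inr (w, ⟨i + 1, by omega⟩))
  have hsub : (treeGraphWith G H ρG ρH L).neighborFinset (inr (inr (w, i))) ⊆ {prev, next} := by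
    rintro (v | ⟨w', h'⟩ | ⟨w', j⟩) hx <;> simp [adj_comm, prev, next] at hx ⊢ <;>
      split_ifs <;> grind
  rw [← card_neighborFinset_eq_degree]
  exact (Finset.card_le_card hsub).trans Finset.card_le_two

lemma maxDegree_le (hL : 0 < L) (hG : G.Connected) :
    (treeGraphWith G H ρG ρH L).maxDegree ≤
      max (max H.maxDegree (G.maxDegree + 1)) (H.degree ρH + 1) := by
  refine maxDegree_le_of_forall_degree_le _ _ ?_
  rintro (u | ⟨w, h⟩ | ⟨w, i⟩)
  · have := G.degree_le_maxDegree u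
    rcases eq_or_ne u ρG with rfl | hne
    · rw [degree_inl_root]
      omega
    · refine (degree_inl_le hL hne).trans ?_
      omega
  · rcases eq_or_ne h ρH with rfl | hne
    · exact (degree_copy_root_le hL).trans (le_max_right _ _)
    · refine (degree_copy_le hne).trans ?_
      have := H.degree_le_maxDegree h
      omega
  · refine degree_tail_le_two.trans ?_
    have := (hG w ρG).degree_pos_left w.2
    have := G.degree_le_maxDegree w
    omega

end Degree

section Dist

lemma edist_inl_tail_le (w : {u : VG // u ≠ ρG}) (k : ℕ) (hk : k < L) :
    (treeGraphWith G H ρG ρH L).edist (inl w) (inr (inr (w, ⟨k, hk⟩))) ≤ k + 1 := by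
  induction k with
  | zero => simpa using (edist_eq_one_iff_adj.mpr (by simp)).le
  | succ k ih =>
    calc _ ≤ (treeGraphWith G H ρG ρH L).edist (inl w) (inr (inr (w, ⟨k, by omega⟩))) +
          (treeGraphWith G H ρG ρH L).edist (inr (inr (w, ⟨k, by omega⟩)))
            (inr (inr (w, ⟨k + 1, hk⟩))) := SimpleGraph.edist_triangle
      _ ≤ (k + 1) + 1 := by
        gcongr
        · exact ih _
        · exact (edist_eq_one_iff_adj.mpr (by simp)).le
      _ = ((k + 1 : ℕ) : ℕ∞) + 1 := by push_cast; rfl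

lemma edist_inl_copy_root_le (hL : 0 < L) (w : {u : VG // u ≠ ρG}) :
    (treeGraphWith G H ρG ρH L).edist (inl w) (inr (inl (w, ρH))) ≤ L + 1 := by
  calc _ ≤ (treeGraphWith G H ρG ρH L).edist (inl w) (inr (inr (w, ⟨L - 1, by omega⟩))) +
        (treeGraphWith G H ρG ρH L).edist (inr (inr (w, ⟨L - 1, by omega⟩)))
          (inr (inl (w, ρH))) := SimpleGraph.edist_triangle
    _ ≤ ((L - 1 : ℕ) + 1) + 1 := by
      gcongr
      · exact edist_inl_tail_le w _ _
      · exact (edist_eq_one_iff_adj.mpr (by simp [adj_comm])).le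
    _ = L + 1 := by rw [← Nat.cast_add_one, Nat.sub_add_cancel hL]

lemma edist_inl_copy_le (hL : 0 < L) [Finite VH] (hH : H.Connected)
    (w : {u : VG // u ≠ ρG}) (h : VH) :
    (treeGraphWith G H ρG ρH L).edist (inl w) (inr (inl (w, h))) ≤ L + 1 + H.diam := by
  let copy : H →g treeGraphWith G H ρG ρH L :=
    ⟨fun h => inr (inl (w, h)), fun hh => adj_copy_copy.mpr ⟨rfl, hh⟩⟩
  calc _ ≤ (treeGraphWith G H ρG ρH L).edist (inl w) (copy ρH) +
        (treeGraphWith G H ρG ρH L).edist (copy ρH) (copy h) := SimpleGraph.edist_triangle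
    _ ≤ L + 1 + H.diam := by
      gcongr
      · exact edist_inl_copy_root_le hL w
      · exact (copy.edist_le ρH h).trans (hH.edist_le_diam ρH h)

def anchor : TreeVert VG VH ρG L → VG
  | inl u => u
  | inr (inl (w, _)) => w
  | inr (inr (w, _)) => w

lemma edist_anchor_le (hL : 0 < L) [Finite VH] (hH : H.Connected) (x : TreeVert VG VH ρG L) :
    (treeGraphWith G H ρG ρH L).edist (inl (anchor x)) x ≤ L + 1 + H.diam := by
  rcases x with u | ⟨w, h⟩ | ⟨w, i⟩
  · simp [anchor]
  · exact edist_inl_copy_le hL hH w h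
  · calc _ ≤ ((i : ℕ) : ℕ∞) + 1 := edist_inl_tail_le w i i.isLt
      _ ≤ L + 1 := by gcongr; exact_mod_cast i.isLt.le
      _ ≤ L + 1 + H.diam := le_self_add

lemma diam_le (hL : 0 < L) [Finite VG] [Finite VH] (hG : G.Connected) (hH : H.Connected) :
    (treeGraphWith G H ρG ρH L).diam ≤ G.diam + 2 * (L + 1 + H.diam) := by
  refine ENat.toNat_le_of_le_natCast (ediam_le_of_edist_le fun x y => ?_)
  let inlHom : G →g treeGraphWith G H ρG ρH L := ⟨inl, adj_inl_inl.mpr⟩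
  calc _ ≤ (treeGraphWith G H ρG ρH L).edist x (inl (anchor y)) +
        (treeGraphWith G H ρG ρH L).edist (inl (anchor y)) y := SimpleGraph.edist_triangle
    _ ≤ (treeGraphWith G H ρG ρH L).edist x (inl (anchor x)) +
        (treeGraphWith G H ρG ρH L).edist (inl (anchor x)) (inl (anchor y)) +
        (treeGraphWith G H ρG ρH L).edist (inl (anchor y)) y := by
      gcongr
      exact SimpleGraph.edist_triangle
    _ ≤ (L + 1 + H.diam) + G.diam + (L + 1 + H.diam) := by
      gcongr
      · rw [edist_comm]
        exact edist_anchor_le hL hH x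
      · exact (inlHom.edist_le _ _).trans (hG.edist_le_diam _ _)
      · exact edist_anchor_le hL hH y
    _ = ((G.diam + 2 * (L + 1 + H.diam) : ℕ) : ℕ∞) := by push_cast; ring

end Dist

end TreeGraph

theorem treeGraph_properties_general
    {VG VH : Type} [Fintype VG] [Fintype VH]
    (G : SimpleGraph VG) (H : SimpleGraph VH) (ρG : VG) (ρH : VH)
    (hGconn : G.Connected) (hHconn : H.Connected)
    (hHedge : H.edgeSet.Nonempty) :
    (treeGraph G H ρG ρH).degree (Sum.inl ρG) = G.degree ρG ∧
    (treeGraph G H ρG ρH).maxDegree ≤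
      max (max H.maxDegree (G.maxDegree + 1)) (H.degree ρH + 1) ∧
    (treeGraph G H ρG ρH).diam ≤ G.diam + 6 * H.diam := by
  have hH := hHconn.one_le_diam hHedge
  have hL : 0 < 2 * H.diam - 1 := by omega
  refine ⟨TreeGraph.degree_inl_root, TreeGraph.maxDegree_le hL hGconn,
    (TreeGraph.diam_le hL hGconn hHconn).trans ?_⟩
  omega

/-- **Basic properties of the tree-of-graphs construction** (Lemma 4.3 / `lem:degrees`).

Let `(H,ρ_H)` and `(G,ρ_G)` be finite connected rooted graphs, each with at least one edge,
and let `𝔾 = 𝔾(G;H)` with root `ρ_𝔾 = ρ_G`.  Then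
(1) `deg_𝔾(ρ_𝔾) = deg_G(ρ_G)`;
(2) `Δ_𝔾 ≤ max {Δ_H, Δ_G + 1, deg_H(ρ_H) + 1}`;
(3) `diam(𝔾) ≤ diam(G) + 6 diam(H)`. -/
theorem treeGraph_properties
    {VG VH : Type} [Fintype VG] [Fintype VH]
    (G : SimpleGraph VG) (H : SimpleGraph VH) (ρG : VG) (ρH : VH)
    (hGconn : G.Connected) (hHconn : H.Connected)
    (hGedge : G.edgeSet.Nonempty) (hHedge : H.edgeSet.Nonempty) :
    (treeGraph G H ρG ρH).degree (Sum.inl ρG) = G.degree ρG ∧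
    (treeGraph G H ρG ρH).maxDegree ≤
      max (max H.maxDegree (G.maxDegree + 1)) (H.degree ρH + 1) ∧
    (treeGraph G H ρG ρH).diam ≤ G.diam + 6 * H.diam :=
  treeGraph_properties_general G H ρG ρH hGconn hHconn hHedge

end
end
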